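/- arXiv:1002.1624 — 8 statements merged into one kernel-verified Lean document; each statement's English description precedes it below -/
import Mathlib

section
/- For every ordinal α, the Hausdorff rank of the linear ordering ω^α (ordinal exponentiation) equals α. -/
/-- A linear(ish) ordering `(σ, r)` is scattered if it has no dense subordering:
no subset `S` with at least two comparable points such that between any two
`r`-related points of `S` there is a third point of `S`. -/
def ScatteredRel (σ : Type) (r : σ → σ → Prop) : Prop :=
  ¬ ∃ S : Set σ, (∃ a ∈ S, ∃ b ∈ S, r a b) ∧
      ∀ a ∈ S, ∀ b ∈ S, r a b → ∃ c ∈ S, r a c ∧ r c b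

/-- Hausdorff's hierarchy: `InV a σ r` means the ordering `(σ, r)` belongs to the
class `V_a`, where `V_0` consists of the empty and one-point orderings and `V_a`
consists of all orderings isomorphic to a `ℤ`-indexed sum of orderings from
`⋃_{b < a} V_b`. -/
inductive InV : Ordinal.{0} → ∀ (σ : Type), (σ → σ → Prop) → Prop
  | zero (σ : Type) (r : σ → σ → Prop) : Subsingleton σ → InV 0 σ r
  | sum (a : Ordinal.{0}) (Q : ℤ → Type) (rQ : ∀ n, Q n → Q n → Prop)
      (o : ℤ → Ordinal.{0}) (ho : ∀ n, o n < a)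
      (h : ∀ n, InV (o n) (Q n) (rQ n))
      (σ : Type) (r : σ → σ → Prop) (e : (Σ n : ℤ, Q n) ≃ σ)
      (he : ∀ x y, Sigma.Lex (· < ·) rQ x y ↔ r (e x) (e y)) :
      InV a σ r

/-- The Hausdorff rank of an ordering: the least ordinal `a` with `(σ, r) ∈ V_a`. -/
noncomputable def hrank (σ : Type) (r : σ → σ → Prop) : Ordinal.{0} :=
  sInf {a | InV a σ r}

section HrankAux
open Ordinal Set

lemma lex_cast {Q : ℤ → Type} {rQ : ∀ n, Q n → Q n → Prop} {u v : Σ n, Q n} {m : ℤ}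
    (h : Sigma.Lex (· < ·) rQ u v)
    (hu : u.1 = m) (hv : v.1 = m) : rQ m (hu ▸ u.2) (hv ▸ v.2) := by
  obtain ⟨i, a⟩ := u; obtain ⟨j, b⟩ := v
  dsimp at hu hv
  subst hu; subst hv
  cases h with
  | left _ _ h' => exact absurd h' (lt_irrefl _)
  | right _ _ h' => exact h'

lemma sigma_cast_inj {Q : ℤ → Type} {u v : Σ n, Q n} {m : ℤ} (hu : u.1 = m) (hv : v.1 = m)
    (h2 : (hu ▸ u.2 : Q m) = hv ▸ v.2) : u = v := by
  obtain ⟨i, a⟩ := u; obtain ⟨j, b⟩ := v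
  dsimp at hu hv
  subst hu; subst hv
  cases h2; rfl

lemma invLowerBound {β : Ordinal} {σ : Type} {r : σ → σ → Prop} (hV : InV β σ r) :
    ∀ (τ : Type) (s : τ → τ → Prop) [IsWellOrder τ s] (f : τ → σ),
      (∀ x y, s x y → r (f x) (f y)) → Function.Injective f →
      Ordinal.type s ≤ Ordinal.omega0 ^ β := by
  induction hV with
  | zero σ r hss =>
    intro τ s _ f hmono hinj
    have hsub : Subsingleton τ := ⟨fun a b => hinj (Subsingleton.elim _ _)⟩
    rw [opow_zero]
    by_contra hc
    push_neg at hc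
    have h0 : (0 : Ordinal) < type s := lt_trans zero_lt_one hc
    have := (enum s).injective
      (a₁ := ⟨0, h0⟩) (a₂ := ⟨1, hc⟩) (Subsingleton.elim _ _)
    exact zero_ne_one (Subtype.mk_eq_mk.1 this)
  | sum a Q rQ o ho h σ r e he ih =>
    intro τ s inst f hmono hinj
    classical
    set F : τ → Σ n, Q n := fun x => e.symm (f x) with hF_def
    have hF : ∀ x y, s x y → Sigma.Lex (· < ·) rQ (F x) (F y) := by
      intro x y hxy
      refine (he (F x) (F y)).2 ?_
      simpa [hF_def, Equiv.apply_symm_apply] using hmono x y hxy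
    set idx : τ → ℤ := fun x => (F x).1 with hidx_def
    have hidx : ∀ x y, s x y → idx x ≤ idx y := by
      intro x y hxy
      rcases Sigma.lex_iff.1 (hF x y hxy) with h' | ⟨h', -⟩
      · exact le_of_lt h'
      · exact le_of_eq h' 
    have hFinj : Function.Injective F := fun x y hxy => hinj (e.symm.injective hxy)
    -- finiteness of index images
    have hfin : ∀ x : τ, (idx '' {y | s y x}).Finite := by
      intro x
      rcases Set.eq_empty_or_nonempty {y | s y x} with hemp | ⟨w, hw⟩
      · rw [hemp]; simp
      · have hne : Set.Nonempty {y | s y x} := ⟨w, hw⟩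
        set m0 := (IsWellFounded.wf (r := s)).min {y | s y x} hne with hm0
        apply Set.Finite.subset (Set.finite_Icc (idx m0) (idx x))
        rintro k ⟨y, hy, rfl⟩
        constructor
        · rcases trichotomous_of s y m0 with h' | h' | h'
          · exact absurd h' ((IsWellFounded.wf (r := s)).not_lt_min _ hy)
          · exact le_of_eq (congrArg idx h'.symm)
          · exact hidx _ _ h'
        · exact hidx _ _ hy
    have main : ∀ (k : ℕ) (x : τ), (idx '' {y | s y x}).ncard ≤ k →
        typein s x < Ordinal.omega0 ^ a := by
      intro k
      induction k with
      | zero =>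
        intro x hx
        have hemp : idx '' {y | s y x} = ∅ := by
          rw [← Set.ncard_eq_zero (hfin x)]; omega
        have hemp2 : {y | s y x} = ∅ := Set.image_eq_empty.1 hemp
        rw [← type_subrel]
        have hie : IsEmpty {y | s y x} := by rw [hemp2]; exact Set.isEmpty_coe_sort.2 rfl
        rw [type_eq_zero_iff_isEmpty.2 hie]
        exact opow_pos a omega0_pos
      | succ k IHk =>
        intro x hx
        rcases Set.eq_empty_or_nonempty (idx '' {y | s y x}) with hemp | hne
        · have hemp2 : {y | s y x} = ∅ := Set.image_eq_empty.1 hemp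
          rw [← type_subrel]
          have hie : IsEmpty {y | s y x} := by rw [hemp2]; exact Set.isEmpty_coe_sort.2 rfl
          rw [type_eq_zero_iff_isEmpty.2 hie]
          exact opow_pos a omega0_pos
        · -- maximal index below x
          set m : ℤ := (hfin x).toFinset.max'
            (by rwa [Set.Finite.toFinset_nonempty]) with hm_def
          have hm_mem : m ∈ idx '' {y | s y x} := by
            have := (hfin x).toFinset.max'_mem
              (by rwa [Set.Finite.toFinset_nonempty])
            rwa [Set.Finite.mem_toFinset] at this
          have hm_max : ∀ k' ∈ idx '' {y | s y x}, k' ≤ m := by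
            intro k' hk'
            exact (hfin x).toFinset.le_max' k' ((Set.Finite.mem_toFinset _).2 hk')
          obtain ⟨w, hw_mem, hw_idx⟩ := hm_mem
          -- least element with index ≥ m
          have hxT : x ∈ {y | m ≤ idx y} := by
            rw [Set.mem_setOf_eq, ← hw_idx]; exact hidx w x hw_mem
          have hTne : Set.Nonempty {y | m ≤ idx y} := ⟨x, hxT⟩
          obtain ⟨x₀, hx₀T, hxmin⟩ : ∃ x₀, m ≤ idx x₀ ∧ ∀ y, s y x₀ → ¬ m ≤ idx y :=
            ⟨(IsWellFounded.wf (r := s)).min {y | m ≤ idx y} hTne,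
              (IsWellFounded.wf (r := s)).min_mem _ hTne,
              fun y hy hym => (IsWellFounded.wf (r := s)).not_lt_min _ hym hy⟩
          have hxx₀ : ¬ s x x₀ := fun h' => hxmin x h' hxT
          have hx₀x : x₀ = x ∨ s x₀ x := by
            rcases trichotomous_of s x₀ x with h' | h' | h'
            · exact Or.inr h'
            · exact Or.inl h'
            · exact absurd h' hxx₀
          have hCsub : ∀ y, s y x₀ → s y x ∧ idx y < m := by
            intro y hy
            have h1 : s y x := by
              rcases hx₀x with rfl | h'
              · exact hy
              · exact _root_.trans hy h'
            refine ⟨h1, ?_⟩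
            by_contra hc
            push_neg at hc
            exact hxmin y hy hc
          have hBsub : ∀ y, s y x → ¬ s y x₀ → idx y = m := by
            intro y hyx hyx₀
            have hle : idx y ≤ m := hm_max _ ⟨y, hyx, rfl⟩
            have hge : m ≤ idx y := by
              rcases trichotomous_of s y x₀ with h' | h' | h'
              · exact absurd h' hyx₀
              · rw [h']; exact hx₀T
              · exact le_trans hx₀T (hidx _ _ h')
            omega
          set B : Set τ := {y | s y x ∧ ¬ s y x₀} with hB_def
          -- typein bound via sum decomposition
          have hdec : typein s x ≤ typein s x₀ + type (Subrel s (· ∈ B)) := by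
            have hgm : ∀ (y z : {y | s y x}), Subrel s {y | s y x} y z →
                Sum.Lex (Subrel s {y | s y x₀}) (Subrel s (· ∈ B))
                  (if h' : s y.1 x₀ then Sum.inl ⟨y.1, h'⟩ else Sum.inr ⟨y.1, y.2, h'⟩)
                  (if h' : s z.1 x₀ then Sum.inl ⟨z.1, h'⟩ else Sum.inr ⟨z.1, z.2, h'⟩) := by
              intro y z hyz
              by_cases hy : s y.1 x₀ <;> by_cases hz : s z.1 x₀ <;>
                simp only [hy, hz, dif_pos, dif_neg, not_false_iff]
              · exact Sum.Lex.inl hyz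
              · exact Sum.Lex.sep _ _
              · exact absurd (_root_.trans (show s y.1 z.1 from hyz) hz) hy
              · exact Sum.Lex.inr hyz
            rw [← type_subrel s x₀, ← type_sum_lex, ← type_subrel s x]
            exact RelEmbedding.ordinal_type_le (RelEmbedding.ofMonotone _ hgm)
          -- bound the B part by the m-th piece
          have hBidx : ∀ y : B, (F y.1).1 = m := fun y => hBsub y.1 y.2.1 y.2.2
          have hBle : type (Subrel s (· ∈ B)) ≤ Ordinal.omega0 ^ o m := by
            refine ih m B (Subrel s (· ∈ B)) (fun y => (hBidx y) ▸ (F y.1).2) ?_ ?_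
            · intro y z hyz
              exact lex_cast (hF _ _ hyz) (hBidx y) (hBidx z)
            · intro y z h2
              exact Subtype.ext (hFinj (sigma_cast_inj (hBidx y) (hBidx z) h2))
          -- apply inner induction hypothesis to x₀
          have hx₀card : (idx '' {y | s y x₀}).ncard ≤ k := by
            have hsub2 : idx '' {y | s y x₀} ⊆ (idx '' {y | s y x}) \ {m} := by
              rintro k' ⟨y, hy, rfl⟩
              obtain ⟨h1, h2⟩ := hCsub y hy
              exact ⟨⟨y, h1, rfl⟩, by simpa using ne_of_lt h2⟩
            have h3 := Set.ncard_le_ncard hsub2 ((hfin x).diff)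
            have hmem : m ∈ idx '' {y | s y x} := ⟨w, hw_mem, hw_idx⟩
            rw [Set.ncard_diff_singleton_of_mem hmem] at h3
            omega
          have hx₀lt := IHk x₀ hx₀card
          calc typein s x ≤ typein s x₀ + type (Subrel s (· ∈ B)) := hdec
            _ ≤ typein s x₀ + Ordinal.omega0 ^ o m := add_le_add_right hBle _
            _ < Ordinal.omega0 ^ a := principal_add_omega0_opow a hx₀lt
                ((opow_lt_opow_iff_right one_lt_omega0).2 (ho m))
    by_contra hc
    push_neg at hc
    have := main _ (enum s ⟨Ordinal.omega0 ^ a, hc⟩) le_rfl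
    rw [typein_enum] at this
    exact lt_irrefl _ this

@[reducible] def pieceType (g : ℕ → Ordinal.{0}) : ℤ → Type
  | .ofNat k => (Ordinal.omega0 ^ g k).ToType
  | .negSucc _ => Empty

@[reducible] def pieceRel (g : ℕ → Ordinal.{0}) : ∀ n : ℤ, pieceType g n → pieceType g n → Prop
  | .ofNat _ => (· < ·)
  | .negSucc _ => fun x _ => x.elim

noncomputable def cuts (g : ℕ → Ordinal.{0}) : ℕ → Ordinal.{0}
  | 0 => 0
  | n + 1 => cuts g n + Ordinal.omega0 ^ g n

noncomputable def EOrd (g : ℕ → Ordinal.{0}) : (Σ n : ℤ, pieceType g n) → Ordinal.{0}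
  | ⟨.ofNat k, t⟩ => cuts g k + ((@Ordinal.ToType.mk _).symm t).1
  | ⟨.negSucc _, t⟩ => t.elim

lemma cuts_strictMono (g : ℕ → Ordinal.{0}) : StrictMono (cuts g) :=
  strictMono_nat_of_lt_succ fun n => by
    have : (0 : Ordinal) < Ordinal.omega0 ^ g n := opow_pos _ omega0_pos
    simpa [cuts] using this

lemma EOrd_lt_of_lex (g : ℕ → Ordinal.{0}) {x y : Σ n : ℤ, pieceType g n}
    (h : Sigma.Lex (· < ·) (pieceRel g) x y) : EOrd g x < EOrd g y := by
  cases h with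
  | left a b hij =>
    rename_i i j
    cases i with
    | negSucc k => exact a.elim
    | ofNat k =>
      cases j with
      | negSucc l => exact b.elim
      | ofNat l =>
        have hkl : k < l := Int.ofNat_lt.1 hij
        show cuts g k + ((@Ordinal.ToType.mk _).symm a).1 <
          cuts g l + ((@Ordinal.ToType.mk _).symm b).1
        calc cuts g k + ((@Ordinal.ToType.mk _).symm a).1
            < cuts g k + Ordinal.omega0 ^ g k :=
              add_lt_add_right ((@Ordinal.ToType.mk _).symm a).2 _
          _ = cuts g (k + 1) := rfl
          _ ≤ cuts g l := (cuts_strictMono g).monotone hkl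
          _ ≤ cuts g l + ((@Ordinal.ToType.mk _).symm b).1 := le_self_add
  | right a b hab =>
    rename_i i
    cases i with
    | negSucc k => exact a.elim
    | ofNat k =>
      show cuts g k + ((@Ordinal.ToType.mk _).symm a).1 <
        cuts g k + ((@Ordinal.ToType.mk _).symm b).1
      have h2 : (@Ordinal.ToType.mk (Ordinal.omega0 ^ g k)).symm a <
          (@Ordinal.ToType.mk (Ordinal.omega0 ^ g k)).symm b :=
        (OrderIso.lt_iff_lt _).2 hab
      exact add_lt_add_right (Subtype.coe_lt_coe.2 h2) _

lemma EOrd_lt_iff (g : ℕ → Ordinal.{0}) (x y : Σ n : ℤ, pieceType g n) :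
    Sigma.Lex (· < ·) (pieceRel g) x y ↔ EOrd g x < EOrd g y := by
  refine ⟨EOrd_lt_of_lex g, fun hE => ?_⟩
  rcases x with ⟨i, a⟩
  rcases y with ⟨j, b⟩
  rcases lt_trichotomy i j with hij | hij | hij
  · exact Sigma.Lex.left a b hij
  · subst hij
    cases i with
    | negSucc k => exact a.elim
    | ofNat k =>
      rcases lt_trichotomy a b with hab | hab | hab
      · exact Sigma.Lex.right a b hab
      · subst hab; exact absurd hE (lt_irrefl _)
      · exact absurd (lt_trans hE (EOrd_lt_of_lex g (Sigma.Lex.right b a hab))) (lt_irrefl _)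
  · exact absurd (lt_trans hE (EOrd_lt_of_lex g (Sigma.Lex.left b a hij))) (lt_irrefl _)

lemma lex_trichotomy (g : ℕ → Ordinal.{0}) (x y : Σ n : ℤ, pieceType g n) :
    x = y ∨ Sigma.Lex (· < ·) (pieceRel g) x y ∨ Sigma.Lex (· < ·) (pieceRel g) y x := by
  rcases x with ⟨i, a⟩
  rcases y with ⟨j, b⟩
  rcases lt_trichotomy i j with hij | hij | hij
  · exact Or.inr (Or.inl (Sigma.Lex.left a b hij))
  · subst hij
    cases i with
    | negSucc k => exact a.elim
    | ofNat k =>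
      rcases lt_trichotomy a b with hab | hab | hab
      · exact Or.inr (Or.inl (Sigma.Lex.right a b hab))
      · subst hab; exact Or.inl rfl
      · exact Or.inr (Or.inr (Sigma.Lex.right b a hab))
  · exact Or.inr (Or.inr (Sigma.Lex.left b a hij))

lemma inV_of_cuts (α : Ordinal.{0}) (hα0 : 0 < α) (g : ℕ → Ordinal.{0}) (hg : ∀ n, g n < α)
    (hsup : ∀ δ < Ordinal.omega0 ^ α, ∃ n, δ < cuts g n)
    (hpieces : ∀ n, InV (g n) (Ordinal.omega0 ^ g n).ToType (· < ·)) :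
    InV α (Ordinal.omega0 ^ α).ToType (· < ·) := by
  classical
  have hcutlt : ∀ n, cuts g n < Ordinal.omega0 ^ α := by
    intro n
    induction n with
    | zero =>
      show (0 : Ordinal) < _
      exact opow_pos _ omega0_pos
    | succ n IH =>
      show cuts g n + _ < _
      exact principal_add_omega0_opow α IH ((opow_lt_opow_iff_right one_lt_omega0).2 (hg n))
  have hEb : ∀ x : Σ n : ℤ, pieceType g n, EOrd g x < Ordinal.omega0 ^ α := by
    rintro ⟨i, a⟩
    cases i with
    | negSucc k => exact a.elim
    | ofNat k =>
      show cuts g k + ((@Ordinal.ToType.mk _).symm a).1 < _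
      calc cuts g k + ((@Ordinal.ToType.mk _).symm a).1
          < cuts g k + Ordinal.omega0 ^ g k :=
            add_lt_add_right ((@Ordinal.ToType.mk _).symm a).2 _
        _ = cuts g (k + 1) := rfl
        _ < Ordinal.omega0 ^ α := hcutlt _
  set E : (Σ n : ℤ, pieceType g n) → ↥(Set.Iio (Ordinal.omega0 ^ α)) :=
    fun x => ⟨EOrd g x, hEb x⟩ with hE_def
  have hEinj : Function.Injective E := by
    intro x y hxy
    have hval : EOrd g x = EOrd g y := congrArg Subtype.val hxy
    rcases lex_trichotomy g x y with h' | h' | h'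
    · exact h'
    · exact absurd ((EOrd_lt_iff g x y).1 h') (by rw [hval]; exact lt_irrefl _)
    · exact absurd ((EOrd_lt_iff g y x).1 h') (by rw [hval]; exact lt_irrefl _)
  have hEsurj : Function.Surjective E := by
    rintro ⟨δ, hδ⟩
    obtain ⟨N, hN⟩ := hsup δ hδ
    have hP : ∃ n, δ < cuts g n := ⟨N, hN⟩
    have hn0 : δ < cuts g (Nat.find hP) := Nat.find_spec hP
    have hn0pos : Nat.find hP ≠ 0 := by
      intro h0
      rw [h0] at hn0
      exact absurd hn0 (not_lt_of_ge (show (0 : Ordinal) ≤ δ from zero_le))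
    obtain ⟨k, hk⟩ : ∃ k, Nat.find hP = k + 1 := ⟨Nat.find hP - 1, by omega⟩
    have hklt : ¬ δ < cuts g k := Nat.find_min hP (by omega)
    push_neg at hklt
    have hδ2 : δ - cuts g k < Ordinal.omega0 ^ g k := by
      have hlt : δ < cuts g k + Ordinal.omega0 ^ g k := by
        rw [hk] at hn0; exact hn0
      exact sub_lt_of_lt_add hlt (opow_pos _ omega0_pos)
    refine ⟨⟨Int.ofNat k, @Ordinal.ToType.mk _ ⟨δ - cuts g k, hδ2⟩⟩, ?_⟩
    apply Subtype.ext
    show cuts g k +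
      ((@Ordinal.ToType.mk _).symm (@Ordinal.ToType.mk _ ⟨δ - cuts g k, hδ2⟩)).1 = δ
    rw [OrderIso.symm_apply_apply]
    exact Ordinal.add_sub_cancel_of_le hklt
  refine InV.sum α (pieceType g) (pieceRel g)
    (fun n => match n with | .ofNat k => g k | .negSucc _ => 0)
    (fun n => by cases n with
      | ofNat k => exact hg k
      | negSucc k => exact hα0)
    (fun n => by cases n with
      | ofNat k => exact hpieces k
      | negSucc k => exact InV.zero _ _ ⟨fun a b => a.elim⟩)
    _ (· < ·)
    ((Equiv.ofBijective E ⟨hEinj, hEsurj⟩).trans (@Ordinal.ToType.mk _).toEquiv)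
    ?_
  intro x y
  rw [EOrd_lt_iff]
  show EOrd g x < EOrd g y ↔
    (@Ordinal.ToType.mk _) (E x) < (@Ordinal.ToType.mk _) (E y)
  rw [OrderIso.lt_iff_lt]
  exact Iff.symm Subtype.mk_lt_mk

lemma inV_upper : ∀ α : Ordinal.{0}, α < (Cardinal.aleph 1).ord →
    InV α (Ordinal.omega0 ^ α).ToType (· < ·) := by
  intro α
  induction α using Ordinal.induction with
  | h α IH =>
    intro hα
    rcases Ordinal.zero_or_succ_or_isSuccLimit α with h0 | ⟨π, hπ⟩ | hlim
    · subst h0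
      refine InV.zero _ _ ?_
      haveI : IsWellOrder (Ordinal.omega0 ^ (0 : Ordinal.{0})).ToType
          ((· < ·) : _ → _ → Prop) := isWellOrder_lt
      constructor
      intro a b
      have ha := lt_of_lt_of_le (Ordinal.typein_lt_self a) (le_of_eq (opow_zero _))
      have hb := lt_of_lt_of_le (Ordinal.typein_lt_self b) (le_of_eq (opow_zero _))
      have hab : typein (α := (Ordinal.omega0 ^ (0 : Ordinal.{0})).ToType) (· < ·) a =
          typein (· < ·) b :=
        (Ordinal.lt_one_iff_zero.1 ha).trans (Ordinal.lt_one_iff_zero.1 hb).symm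
      exact typein_injective (· < ·) hab
    · subst hπ
      refine inV_of_cuts _ (lt_of_le_of_lt (show (0 : Ordinal) ≤ π from zero_le) (Order.lt_succ π))
        (fun _ => π) (fun _ => Order.lt_succ π) ?_
        (fun _ => IH π (Order.lt_succ π) (lt_trans (Order.lt_succ π) hα))
      have hc : ∀ n, cuts (fun _ => π) n = Ordinal.omega0 ^ π * n := by
        intro n
        induction n with
        | zero => simp [cuts]
        | succ n IH2 =>
          show cuts _ n + _ = _
          rw [IH2, Nat.cast_succ, mul_add, mul_one]
      intro δ hδ
      rw [opow_succ] at hδ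
      rcases (lt_mul_iff_of_isSuccLimit isSuccLimit_omega0).1 hδ with ⟨c', hc', hδ'⟩
      rcases lt_omega0.1 hc' with ⟨n, rfl⟩
      exact ⟨n, by rw [hc]; exact hδ'⟩
    · have hα0 : 0 < α := hlim.pos
      have hcnt : (Set.Iio α).Countable := by
        rw [Cardinal.countable_iff_lt_aleph_one, Ordinal.mk_Iio_ordinal]
        have h1 : α.card < Cardinal.aleph 1 := Cardinal.lt_ord.1 hα
        refine lt_of_lt_of_eq (Cardinal.lift_lt.2 h1) ?_
        rw [Cardinal.lift_aleph, Ordinal.lift_one]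
      obtain ⟨b', hb'⟩ :=
        (Set.countable_iff_exists_surjective ⟨0, Set.mem_Iio.2 hα0⟩).1 hcnt
      have hbmem : ∀ n, (b' n).1 < α := fun n => Set.mem_Iio.1 (b' n).2
      refine inV_of_cuts _ hα0 (fun n => (b' n).1) hbmem ?_
        (fun n => IH _ (hbmem n) (lt_trans (hbmem n) hα))
      intro δ hδ
      rcases (lt_opow_of_isSuccLimit omega0_ne_zero hlim).1 hδ with ⟨β, hβα, hδβ⟩
      obtain ⟨n, hn⟩ := hb' ⟨β, hβα⟩
      refine ⟨n + 1, ?_⟩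
      show δ < cuts _ n + Ordinal.omega0 ^ (b' n).1
      have hle : Ordinal.omega0 ^ β ≤ cuts (fun n => (b' n).1) n + Ordinal.omega0 ^ (b' n).1 := by
        rw [show ((b' n).1 : Ordinal) = β from congrArg Subtype.val hn]
        exact le_add_self
      exact lt_of_lt_of_le hδβ hle

end HrankAux

/-- For every countable ordinal `α`, the Hausdorff rank of the well-ordering
`ω ^ α` equals `α`. -/
theorem hrank_omega0_opow (α : Ordinal.{0}) (hα : α < (Cardinal.aleph 1).ord) :
    hrank (Ordinal.omega0 ^ α).ToType (· < ·) = α := by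
  have hup := inV_upper α hα
  apply le_antisymm
  · exact csInf_le' hup
  · refine le_csInf ⟨α, hup⟩ ?_
    intro b hb
    haveI : IsWellOrder (Ordinal.omega0 ^ α).ToType ((· < ·) : _ → _ → Prop) :=
      isWellOrder_lt
    have hlow := invLowerBound hb (Ordinal.omega0 ^ α).ToType (· < ·) id
      (fun _ _ h => h) Function.injective_id
    rw [Ordinal.type_toType] at hlow
    exact (Ordinal.opow_le_opow_iff_right Ordinal.one_lt_omega0).1 hlow
end

section
/- Let (P,<) be a scattered countable linear ordering of Hausdorff rank α, and for each x ∈ P let (Q_x,<_x) be a scattered countable linear ordering of rank at most β. Then the generalized sum Σ_{x∈P} Q_x is scattered of rank at most β + α. -/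
set_option linter.unusedSectionVars false

theorem InV.congr {a : Ordinal.{0}} {σ : Type} {r : σ → σ → Prop} {τ : Type} {s : τ → τ → Prop}
    (h : InV a σ r) (e : σ ≃ τ) (he : ∀ x y, r x y ↔ s (e x) (e y)) : InV a τ s := by
  cases h with
  | zero _ _ hs => exact InV.zero _ _ (Equiv.subsingleton.symm e)
  | sum a Q rQ o ho hQ σ r e0 he0 =>
      exact InV.sum a Q rQ o ho hQ τ s (e0.trans e)
        (fun x y => (he0 x y).trans (he _ _))

theorem inV_zero_lift {σ : Type} {r : σ → σ → Prop} (hs : Subsingleton σ) {a : Ordinal.{0}}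
    (ha : 0 < a) : InV a σ r := by
  refine InV.sum a (fun n => {p : σ // n = 0}) (fun n x y => r x.1 y.1) (fun _ => 0)
    (fun _ => ha)
    (fun n => InV.zero _ _ ⟨fun x y => Subtype.ext (hs.elim x.1 y.1)⟩) σ r
    ⟨fun s => s.2.1, fun s => ⟨0, s, rfl⟩, ?_, fun s => rfl⟩ ?_
  · rintro ⟨n, p, rfl⟩; rfl
  · rintro ⟨n, p, rfl⟩ ⟨m, q, rfl⟩
    simp only [Sigma.lex_iff, lt_irrefl, false_or]
    constructor
    · rintro ⟨h, hr⟩; exact hr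
    · intro hr; exact ⟨trivial, hr⟩

theorem InV.mono {a b : Ordinal.{0}} {σ : Type} {r : σ → σ → Prop} (h : InV a σ r)
    (hab : a ≤ b) : InV b σ r := by
  rcases eq_or_lt_of_le hab with rfl | hlt
  · exact h
  cases h with
  | zero _ _ hs => exact inV_zero_lift hs hlt
  | sum a Q rQ o ho hQ σ r e he =>
      exact InV.sum b Q rQ o (fun n => (ho n).trans hlt) hQ σ r e he

theorem sigma_lex_subtype_iff {ι : Type} {lt : ι → ι → Prop} {Q : ι → Type}
    {rQ : ∀ i, Q i → Q i → Prop} {p : ∀ i, Set (Q i)} {n m : ι} {x : p n} {y : p m} :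
    Sigma.Lex lt (fun i (a : p i) (b : p i) => rQ i a.1 b.1) ⟨n, x⟩ ⟨m, y⟩ ↔
      Sigma.Lex lt rQ ⟨n, x.1⟩ ⟨m, y.1⟩ := by
  simp only [Sigma.lex_iff]
  refine or_congr Iff.rfl (exists_congr fun h => ?_)
  subst h
  rfl

theorem InV.subset : ∀ {a : Ordinal.{0}} {σ : Type} {r : σ → σ → Prop}, InV a σ r →
    ∀ p : Set σ, InV a p (fun x y => r x.1 y.1) := by
  intro a σ r h
  induction h with
  | zero σ r hs => exact fun p => InV.zero _ _ ⟨fun x y => Subtype.ext (hs.elim x.1 y.1)⟩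
  | sum a Q rQ o ho hQ σ r e he IH =>
      intro p
      refine InV.sum a (fun n => {x : Q n // e ⟨n, x⟩ ∈ p}) (fun n x y => rQ n x.1 y.1) o ho
        (fun n => ?_) _ _ (Equiv.ofBijective (fun s => ⟨e ⟨s.1, s.2.1⟩, s.2.2⟩) ⟨?_, ?_⟩) ?_
      · exact IH n {x | e ⟨n, x⟩ ∈ p}
      · rintro ⟨n, x⟩ ⟨m, y⟩ hxy
        have h1 : (⟨n, x.1⟩ : Σ i, Q i) = ⟨m, y.1⟩ := e.injective (congrArg Subtype.val hxy)
        obtain ⟨rfl, h2⟩ := Sigma.mk.inj_iff.mp h1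
        obtain rfl : x = y := Subtype.ext (eq_of_heq h2)
        rfl
      · rintro ⟨s, hs⟩
        rcases h' : e.symm s with ⟨n, x⟩
        have hx : e ⟨n, x⟩ = s := by rw [← h', e.apply_symm_apply]
        exact ⟨⟨n, x, by rw [hx]; exact hs⟩, Subtype.ext hx⟩
      · rintro ⟨n, x⟩ ⟨m, y⟩
        exact sigma_lex_subtype_iff.trans (he ⟨n, x.1⟩ ⟨m, y.1⟩)

def InW {σ : Type} [LinearOrder σ] (S : Set σ) : Prop :=
  ∃ a, InV a S (fun x y => (x : σ) < (y : σ))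

theorem InW.of_subsingleton {σ : Type} [LinearOrder σ] {S : Set σ} (h : S.Subsingleton) :
    InW S := ⟨0, InV.zero _ _ ⟨fun x y => Subtype.ext (h x.2 y.2)⟩⟩

theorem InW.mono {σ : Type} [LinearOrder σ] {S T : Set σ} (h : InW S) (hsub : T ⊆ S) :
    InW T := by
  obtain ⟨a, ha⟩ := h
  refine ⟨a, (ha.subset {x : S | (x : σ) ∈ T}).congr
    (Equiv.ofBijective (fun x => ⟨x.1.1, x.2⟩) ⟨?_, ?_⟩) (fun x y => Iff.rfl)⟩
  · rintro ⟨⟨x, hxS⟩, hxT⟩ ⟨⟨y, hyS⟩, hyT⟩ hxy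
    simp only [Subtype.mk.injEq] at hxy
    subst hxy
    rfl
  · intro t
    exact ⟨⟨⟨t.1, hsub t.2⟩, t.2⟩, rfl⟩

theorem InW.iUnion {σ : Type} [LinearOrder σ] (f : ℤ → Set σ)
    (hord : ∀ m n : ℤ, m < n → ∀ x ∈ f m, ∀ y ∈ f n, x < y)
    (hW : ∀ n, InW (f n)) : InW (⋃ n, f n) := by
  choose o ho using hW
  have hbound : ∀ n, o n < (⨆ m, o m) + 1 := by
    intro n
    rw [Ordinal.add_one_eq_succ]
    exact Order.lt_succ_iff.2 (Ordinal.le_iSup o n)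
  refine ⟨(⨆ m, o m) + 1, InV.sum _ (fun n => (f n)) (fun n x y => (x : σ) < (y : σ)) o hbound ho
    _ _ (Equiv.ofBijective (fun s => ⟨s.2.1, Set.mem_iUnion.2 ⟨s.1, s.2.2⟩⟩) ⟨?_, ?_⟩) ?_⟩
  · rintro ⟨n, x⟩ ⟨m, y⟩ hxy
    have hxy' : (x : σ) = y := congrArg Subtype.val hxy
    rcases lt_trichotomy n m with hlt | rfl | hlt
    · exact absurd (hxy' ▸ hord n m hlt x x.2 y y.2) (lt_irrefl _)
    · cases Subtype.ext hxy'; rfl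
    · exact absurd (hxy' ▸ hord m n hlt y y.2 x x.2) (lt_irrefl _)
  · rintro ⟨s, hs⟩
    obtain ⟨n, hn⟩ := Set.mem_iUnion.1 hs
    exact ⟨⟨n, s, hn⟩, rfl⟩
  · rintro ⟨n, x⟩ ⟨m, y⟩
    constructor
    · intro h
      cases h with
      | left _ _ h => exact hord n m h x x.2 y y.2
      | right _ _ h => exact h
    · intro h
      rcases lt_trichotomy n m with hlt | rfl | hlt
      · exact Sigma.Lex.left _ _ hlt
      · exact Sigma.Lex.right _ _ h
      · exact absurd (h.trans (hord m n hlt y y.2 x x.2)) (lt_irrefl _)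

theorem InW.union2 {σ : Type} [LinearOrder σ] {S T : Set σ} (hS : InW S) (hT : InW T)
    (h : ∀ x ∈ S, ∀ y ∈ T, x < y) : InW (S ∪ T) := by
  have hcov : S ∪ T = ⋃ n : ℤ, (if n = 0 then S else if n = 1 then T else ∅) := by
    ext x
    simp only [Set.mem_iUnion, Set.mem_union]
    constructor
    · rintro (hx | hx)
      · exact ⟨0, by simp [hx]⟩
      · exact ⟨1, by simp [hx]⟩
    · rintro ⟨n, hn⟩
      by_cases h0 : n = 0
      · subst h0; norm_num at hn; exact Or.inl hn
      by_cases h1 : n = 1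
      · subst h1; norm_num at hn; exact Or.inr hn
      · rw [if_neg h0, if_neg h1] at hn; exact absurd hn (Set.notMem_empty x)
  rw [hcov]
  refine InW.iUnion _ ?_ ?_
  · intro m n hmn x hx y hy
    split_ifs at hx hy with e1 e2 e3 e4 e5
    all_goals first
      | exact absurd hx (Set.notMem_empty x)
      | exact absurd hy (Set.notMem_empty y)
      | omega
      | exact h x hx y hy
  · intro n
    split_ifs with e1 e2
    · exact hS
    · exact hT
    · exact InW.of_subsingleton (by simp [Set.Subsingleton])

section PseudoClass

variable {σ : Type} [LinearOrder σ] [Countable σ]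

theorem InW.pseudoClass (C : Set σ)
    (hC : ∀ a ∈ C, ∀ b ∈ C, a ≤ b → InW (Set.Icc a b)) : InW C := by
  rcases C.eq_empty_or_nonempty with rfl | ⟨c, hc⟩
  · exact InW.of_subsingleton (by simp [Set.Subsingleton])
  have : Nonempty C := ⟨⟨c, hc⟩⟩
  obtain ⟨g, hg⟩ := exists_surjective_nat C
  have mem_inf : ∀ {x y : σ}, x ∈ C → y ∈ C → x ⊓ y ∈ C := by
    intro x y hx hy
    rcases le_total x y with h | h
    · rwa [inf_eq_left.2 h]
    · rwa [inf_eq_right.2 h]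
  have mem_sup : ∀ {x y : σ}, x ∈ C → y ∈ C → x ⊔ y ∈ C := by
    intro x y hx hy
    rcases le_total x y with h | h
    · rwa [sup_eq_right.2 h]
    · rwa [sup_eq_left.2 h]
  set lo : ℕ → σ := fun k => Nat.rec (c ⊓ (g 0).1) (fun k ih => ih ⊓ (g (k + 1)).1) k with hlo
  set hi : ℕ → σ := fun k => Nat.rec (c ⊔ (g 0).1) (fun k ih => ih ⊔ (g (k + 1)).1) k with hhi
  have lo_succ : ∀ k, lo (k + 1) = lo k ⊓ (g (k + 1)).1 := fun k => rfl
  have hi_succ : ∀ k, hi (k + 1) = hi k ⊔ (g (k + 1)).1 := fun k => rfl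
  have lo_mem : ∀ k, lo k ∈ C := by
    intro k
    induction k with
    | zero => exact mem_inf hc (g 0).2
    | succ k ih => rw [lo_succ]; exact mem_inf ih (g (k + 1)).2
  have hi_mem : ∀ k, hi k ∈ C := by
    intro k
    induction k with
    | zero => exact mem_sup hc (g 0).2
    | succ k ih => rw [hi_succ]; exact mem_sup ih (g (k + 1)).2
  have lo_anti : Antitone lo := antitone_nat_of_succ_le fun k => inf_le_left
  have hi_mono : Monotone hi := monotone_nat_of_le_succ fun k => le_sup_left
  have lo_le_c : ∀ k, lo k ≤ c := fun k => (lo_anti (Nat.zero_le k)).trans inf_le_left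
  have c_le_hi : ∀ k, c ≤ hi k := fun k => le_sup_left.trans (hi_mono (Nat.zero_le k))
  have mem_J : ∀ k, (g k).1 ∈ Set.Icc (lo k) (hi k) := by
    intro k
    cases k with
    | zero => exact ⟨inf_le_right, le_sup_right⟩
    | succ k => exact ⟨by rw [lo_succ]; exact inf_le_right, by rw [hi_succ]; exact le_sup_right⟩
  have J_W : ∀ k, InW (Set.Icc (lo k) (hi k)) :=
    fun k => hC _ (lo_mem k) _ (hi_mem k) ((lo_le_c k).trans (c_le_hi k))
  set piece : ℤ → Set σ := fun n =>
    C ∩ (match n with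
      | Int.ofNat 0 => Set.Icc (lo 0) (hi 0)
      | Int.ofNat (k + 1) => Set.Ioc (hi k) (hi (k + 1))
      | Int.negSucc k => Set.Ico (lo (k + 1)) (lo k)) with hpiece
  have pW : ∀ n, InW (piece n) := by
    intro n
    match n with
    | Int.ofNat 0 => exact (J_W 0).mono (Set.inter_subset_right)
    | Int.ofNat (k + 1) =>
        refine (J_W (k + 1)).mono ?_
        rintro x ⟨-, h1, h2⟩
        exact ⟨(lo_le_c (k + 1)).trans ((c_le_hi k).trans h1.le), h2⟩
    | Int.negSucc k =>
        refine (J_W (k + 1)).mono ?_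
        rintro x ⟨-, h1, h2⟩
        exact ⟨h1, (h2.le.trans (lo_le_c k)).trans (c_le_hi (k + 1))⟩
  have pOrd : ∀ m n : ℤ, m < n → ∀ x ∈ piece m, ∀ y ∈ piece n, x < y := by
    intro m n hmn x hx y hy
    have xup : ∀ k, x ∈ piece (Int.ofNat k) → x ≤ hi k := by
      rintro (_ | k) ⟨-, hx1, hx2⟩
      · exact hx2
      · exact hx2
    have xupN : ∀ k, x ∈ piece (Int.negSucc k) → x < lo k := fun k hx => hx.2.2
    have ylow : ∀ k, y ∈ piece (Int.ofNat (k + 1)) → hi k < y := fun k hy => hy.2.1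
    have ylow0 : y ∈ piece (Int.ofNat 0) → lo 0 ≤ y := fun hy => hy.2.1
    have ylowN : ∀ k, y ∈ piece (Int.negSucc k) → lo (k + 1) ≤ y := fun k hy => hy.2.1
    match m, n with
    | Int.ofNat j, Int.ofNat k =>
        have hjk : j < k := Int.ofNat_lt.mp hmn
        obtain ⟨k', rfl⟩ : ∃ k', k = k' + 1 := ⟨k - 1, by omega⟩
        exact lt_of_le_of_lt ((xup j hx).trans (hi_mono (by omega))) (ylow k' hy)
    | Int.negSucc j, Int.negSucc k =>
        have hkj : k + 1 ≤ j := by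
          rw [Int.negSucc_eq, Int.negSucc_eq] at hmn
          omega
        exact lt_of_lt_of_le ((xupN j hx).trans_le (lo_anti hkj)) (ylowN k hy)
    | Int.negSucc j, Int.ofNat 0 =>
        exact lt_of_lt_of_le ((xupN j hx).trans_le (lo_anti (Nat.zero_le j))) (ylow0 hy)
    | Int.negSucc j, Int.ofNat (k + 1) =>
        exact lt_of_le_of_lt ((xupN j hx).le.trans ((lo_le_c j).trans (c_le_hi k))) (ylow k hy)
    | Int.ofNat j, Int.negSucc k =>
        rw [Int.negSucc_eq, Int.ofNat_eq_coe] at hmn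
        omega
  have hcov : C = ⋃ n, piece n := by
    apply Set.Subset.antisymm
    · intro x hx
      obtain ⟨i, hgi⟩ := hg ⟨x, hx⟩
      have hex : ∃ k, x ∈ Set.Icc (lo k) (hi k) := ⟨i, by have h := mem_J i; rw [hgi] at h; exact h⟩
      set k := Nat.find hex with hk
      have hxk : x ∈ Set.Icc (lo k) (hi k) := Nat.find_spec hex
      rw [Set.mem_iUnion]
      by_cases hk0 : k = 0
      · refine ⟨Int.ofNat 0, hx, ?_⟩
        rw [hk0] at hxk
        exact hxk
      · have hks : k = (k - 1) + 1 := by omega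
        have hxk' : x ∈ Set.Icc (lo ((k - 1) + 1)) (hi ((k - 1) + 1)) := by rw [← hks]; exact hxk
        have hmin : x ∉ Set.Icc (lo (k - 1)) (hi (k - 1)) := Nat.find_min hex (by omega)
        rcases lt_or_ge x (lo (k - 1)) with h | h
        · exact ⟨Int.negSucc (k - 1), hx, hxk'.1, h⟩
        · have h2 : hi (k - 1) < x := by
            by_contra h2
            exact hmin ⟨h, not_lt.1 h2⟩
          exact ⟨Int.ofNat ((k - 1) + 1), hx, h2, hxk'.2⟩
    · exact Set.iUnion_subset fun n x hx => hx.1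
  rw [hcov]
  exact InW.iUnion piece pOrd pW

end PseudoClass

section Hausdorff

variable {σ : Type} [LinearOrder σ] [Countable σ]

def WRel (x y : σ) : Prop := InW (Set.Icc (x ⊓ y) (x ⊔ y))

theorem wrel_of_le {x y : σ} (hxy : x ≤ y) (h : InW (Set.Icc x y)) : WRel x y := by
  rwa [WRel, inf_eq_left.2 hxy, sup_eq_right.2 hxy]

theorem wrel_le {x y : σ} (h : WRel x y) (hxy : x ≤ y) : InW (Set.Icc x y) := by
  rwa [WRel, inf_eq_left.2 hxy, sup_eq_right.2 hxy] at h

theorem WRel.refl (x : σ) : WRel x x := by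
  rw [WRel, inf_idem, sup_idem, Set.Icc_self]
  exact InW.of_subsingleton Set.subsingleton_singleton

theorem WRel.symm {x y : σ} (h : WRel x y) : WRel y x := by
  rwa [WRel, inf_comm y x, sup_comm y x]

theorem WRel.left_of_between {a b c : σ} (h : WRel a b) (h1 : a ≤ c) (h2 : c ≤ b) :
    WRel a c :=
  wrel_of_le h1 ((wrel_le h (h1.trans h2)).mono (Set.Icc_subset_Icc_right h2))

theorem WRel.right_of_between {a b c : σ} (h : WRel a b) (h1 : a ≤ c) (h2 : c ≤ b) :
    WRel c b :=
  wrel_of_le h2 ((wrel_le h (h1.trans h2)).mono (Set.Icc_subset_Icc_left h1))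

theorem WRel.trans {x y z : σ} (hxy : WRel x y) (hyz : WRel y z) : WRel x z := by
  have hmy : x ⊓ y ⊓ z ≤ y := inf_le_left.trans inf_le_right
  have hyM : y ≤ x ⊔ y ⊔ z := le_sup_right.trans le_sup_left
  have hA : InW (Set.Icc (x ⊓ y ⊓ z) y) := by
    have ident : x ⊓ y ⊓ z = (x ⊓ y) ⊓ (y ⊓ z) := by
      rw [← inf_assoc (x ⊓ y) y z, inf_assoc x y y, inf_idem y]
    rcases le_total (x ⊓ y) (y ⊓ z) with h | h
    · rw [ident, inf_eq_left.2 h]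
      exact hxy.mono (Set.Icc_subset_Icc_right le_sup_right)
    · rw [ident, inf_eq_right.2 h]
      exact hyz.mono (Set.Icc_subset_Icc_right le_sup_left)
  have hB : InW (Set.Ioc y (x ⊔ y ⊔ z)) := by
    have ident : x ⊔ y ⊔ z = (x ⊔ y) ⊔ (y ⊔ z) := by
      rw [← sup_assoc (x ⊔ y) y z, sup_assoc x y y, sup_idem y]
    rcases le_total (x ⊔ y) (y ⊔ z) with h | h
    · rw [ident, sup_eq_right.2 h]
      refine hyz.mono ?_
      rintro t ⟨h1, h2⟩
      exact ⟨inf_le_left.trans h1.le, h2⟩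
    · rw [ident, sup_eq_left.2 h]
      refine hxy.mono ?_
      rintro t ⟨h1, h2⟩
      exact ⟨inf_le_right.trans h1.le, h2⟩
  have hMM : InW (Set.Icc (x ⊓ y ⊓ z) (x ⊔ y ⊔ z)) := by
    rw [← Set.Icc_union_Ioc_eq_Icc hmy hyM]
    exact hA.union2 hB (fun s hs t ht => hs.2.trans_lt ht.1)
  refine hMM.mono (Set.Icc_subset_Icc ?_ ?_)
  · exact le_inf (inf_le_left.trans inf_le_left) inf_le_right
  · exact sup_le (le_sup_left.trans le_sup_left) le_sup_right

theorem wrel_cross {a b u v : σ} (hab : a < b) (hn : ¬ WRel a b) (hua : WRel u a)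
    (hvb : WRel v b) : u < v := by
  by_contra hvu
  push_neg at hvu
  rcases le_total v a with h | h
  · exact hn (hvb.right_of_between h hab.le)
  · exact hn ((hua.symm.left_of_between h hvu).trans hvb)

theorem exists_inV (σ : Type) [LinearOrder σ] [Countable σ]
    (hsc : ScatteredRel σ (· < ·)) : ∃ a, InV a σ (· < ·) := by
  have main : ∀ x y : σ, x < y → ¬ WRel x y → False := by
    intro x y hlt hnr
    letI sd : Setoid σ := ⟨WRel, ⟨WRel.refl, fun h => h.symm, fun h h' => h.trans h'⟩⟩
    set S : Set σ := Set.range (fun q : Quotient sd => q.out) with hS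
    have hrel_out : ∀ z : σ, WRel (Quotient.mk sd z).out z := fun z => Quotient.mk_out z
    have hS_nrel : ∀ s ∈ S, ∀ t ∈ S, s ≠ t → ¬ WRel s t := by
      rintro s ⟨q, rfl⟩ t ⟨q', rfl⟩ hne hrel
      exact hne (congrArg Quotient.out (Quotient.out_equiv_out.mp hrel))
    have key : ∀ s ∈ S, ∀ t ∈ S, s < t → ∃ u ∈ S, s < u ∧ u < t := by
      intro s hs t ht hst
      have hnr' : ¬ WRel s t := hS_nrel s hs t ht hst.ne
      have hz : ∃ z, s < z ∧ z < t ∧ ¬ WRel z s ∧ ¬ WRel z t := by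
        by_contra hcon
        push_neg at hcon
        set A := {z | z ∈ Set.Icc s t ∧ WRel s z} with hA'
        set B := {z | z ∈ Set.Icc s t ∧ WRel z t} with hB'
        have hAB : Set.Icc s t = A ∪ B := by
          ext z
          constructor
          · intro hzI
            rcases eq_or_lt_of_le hzI.1 with rfl | hsz
            · exact Or.inl ⟨hzI, WRel.refl _⟩
            rcases eq_or_lt_of_le hzI.2 with rfl | hzt
            · exact Or.inr ⟨hzI, WRel.refl _⟩
            by_cases hzs : WRel z s
            · exact Or.inl ⟨hzI, hzs.symm⟩
            · exact Or.inr ⟨hzI, hcon z hsz hzt hzs⟩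
          · rintro (h | h) <;> exact h.1
        have hA : InW A := by
          refine InW.pseudoClass A (fun a ha b hb hab => ?_)
          exact wrel_le (ha.2.symm.trans hb.2) hab
        have hB : InW B := by
          refine InW.pseudoClass B (fun a ha b hb hab => ?_)
          exact wrel_le (ha.2.trans hb.2.symm) hab
        have hord : ∀ a ∈ A, ∀ b ∈ B, a < b := by
          intro a ha b hb
          by_contra hba
          push_neg at hba
          exact hnr' ((ha.2.left_of_between hb.1.1 hba).trans hb.2)
        exact hnr' (wrel_of_le hst.le (hAB ▸ hA.union2 hB hord))
      obtain ⟨z, hsz, hzt, hzs, hzt'⟩ := hz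
      refine ⟨(Quotient.mk sd z).out, ⟨Quotient.mk sd z, rfl⟩, ?_, ?_⟩
      · exact wrel_cross hsz (fun h => hzs h.symm) (WRel.refl s) (hrel_out z)
      · exact wrel_cross hzt hzt' (hrel_out z) (WRel.refl t)
    refine hsc ⟨S, ⟨(Quotient.mk sd x).out, ⟨_, rfl⟩, (Quotient.mk sd y).out, ⟨_, rfl⟩, ?_⟩,
      fun a ha b hb hab => key a ha b hb hab⟩
    exact wrel_cross hlt hnr (hrel_out x) (hrel_out y)
  have all_rel : ∀ x y : σ, WRel x y := by
    intro x y
    by_contra hxy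
    rcases lt_trichotomy x y with h | rfl | h
    · exact main x y h hxy
    · exact hxy (WRel.refl x)
    · exact main y x h (fun hr => hxy hr.symm)
  have huniv : InW (Set.univ : Set σ) :=
    InW.pseudoClass _ (fun a _ b _ hab => wrel_le (all_rel a b) hab)
  obtain ⟨a, ha⟩ := huniv
  exact ⟨a, ha.congr (Equiv.Set.univ σ) (fun x y => Iff.rfl)⟩

end Hausdorff

theorem inV_sigma : ∀ (a : Ordinal.{0}) (P : Type) [LinearOrder P] (Q : P → Type)
    [∀ x, LinearOrder (Q x)] (β : Ordinal.{0}),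
    InV a P (· < ·) → (∀ x, InV β (Q x) (· < ·)) →
    InV (β + a) (Σ x, Q x) (Sigma.Lex (· < ·) fun _ => (· < ·)) := by
  intro a
  induction a using Ordinal.induction with
  | h a IH =>
  intro P _ Q _ β hP hQ
  cases hP with
  | zero _ _ hsub =>
    rw [add_zero]
    rcases isEmpty_or_nonempty P with hP0 | ⟨⟨x₀⟩⟩
    · have hss : Subsingleton (Σ x, Q x) := ⟨fun s => (hP0.false s.1).elim⟩
      rcases (zero_le (a := β)).eq_or_lt with h0 | h0
      · exact h0 ▸ InV.zero _ _ hss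
      · exact inV_zero_lift hss h0
    · have hall : ∀ x : P, x = x₀ := fun x => Subsingleton.elim x x₀
      refine (hQ x₀).congr
        ⟨fun q => ⟨x₀, q⟩, fun s => cast (congrArg Q (hall s.1)) s.2, fun q => rfl, ?_⟩ ?_
      · rintro ⟨x, q⟩
        obtain rfl := hall x
        rfl
      · intro q q'
        show q < q' ↔ Sigma.Lex (· < ·) (fun _ => (· < ·)) ⟨x₀, q⟩ ⟨x₀, q'⟩
        constructor
        · intro h
          exact Sigma.Lex.right _ _ h
        · intro h
          cases h with
          | left _ _ hh => exact absurd hh (lt_irrefl x₀)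
          | right _ _ hh => exact hh
  | sum a2 Q' rQ' o ho h' σ2 r2 e he =>
    letI LOn : ∀ n, LinearOrder (Q' n) :=
      fun n => LinearOrder.lift' (fun y => e ⟨n, y⟩)
        (fun y z hyz => sigma_mk_injective (e.injective hyz))
    have hlt_def : ∀ n (y z : Q' n), y < z ↔ e ⟨n, y⟩ < e ⟨n, z⟩ := fun n y z => Iff.rfl
    have hrQ' : ∀ n (y z : Q' n), rQ' n y z ↔ y < z := by
      intro n y z
      constructor
      · intro h
        exact (he ⟨n, y⟩ ⟨n, z⟩).mp (Sigma.Lex.right _ _ h)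
      · intro h
        have hx := (he ⟨n, y⟩ ⟨n, z⟩).mpr h
        cases hx with
        | left _ _ hh => exact absurd hh (lt_irrefl n)
        | right _ _ hh => exact hh
    have hInner : ∀ n, InV (β + o n) (Σ y : Q' n, Q (e ⟨n, y⟩))
        (Sigma.Lex (· < ·) fun _ => (· < ·)) := by
      intro n
      refine IH (o n) (ho n) (Q' n) (fun y => Q (e ⟨n, y⟩)) β ?_ (fun y => hQ (e ⟨n, y⟩))
      exact (h' n).congr (Equiv.refl _) (fun y z => hrQ' n y z)
    refine InV.sum (β + a) (fun n => Σ y : Q' n, Q (e ⟨n, y⟩))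
      (fun n => Sigma.Lex (· < ·) fun _ => (· < ·))
      (fun n => β + o n) (fun n => (add_lt_add_iff_left β).2 (ho n)) hInner _ _
      (Equiv.ofBijective (fun s => ⟨e ⟨s.1, s.2.1⟩, s.2.2⟩) ⟨?_, ?_⟩) ?_
    · rintro ⟨n, y, q⟩ ⟨m, z, q'⟩ hF
      obtain ⟨h1, h2⟩ := Sigma.mk.inj_iff.mp hF
      obtain ⟨rfl, h3⟩ := Sigma.mk.inj_iff.mp (e.injective h1)
      obtain rfl := eq_of_heq h3
      obtain rfl := eq_of_heq h2
      rfl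
    · rintro ⟨x, q⟩
      rcases hsymm : e.symm x with ⟨n, y⟩
      have hx : e ⟨n, y⟩ = x := by rw [← hsymm, e.apply_symm_apply]
      subst hx
      exact ⟨⟨n, y, q⟩, rfl⟩
    · rintro ⟨n, y, q⟩ ⟨m, z, q'⟩
      constructor
      · intro hl
        cases hl with
        | left _ _ hnm =>
            exact Sigma.Lex.left _ _ ((he ⟨n, y⟩ ⟨m, z⟩).mp (Sigma.Lex.left _ _ hnm))
        | right _ _ hin =>
            cases hin with
            | left _ _ hyz => exact Sigma.Lex.left _ _ ((hlt_def n _ _).mp hyz)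
            | right _ _ hq => exact Sigma.Lex.right _ _ hq
      · intro hl
        rw [Sigma.lex_iff] at hl
        rcases hl with hfst | ⟨hfst, hsnd⟩
        · have hlx := (he ⟨n, y⟩ ⟨m, z⟩).mpr hfst
          cases hlx with
          | left _ _ h => exact Sigma.Lex.left _ _ h
          | right _ _ h =>
              exact Sigma.Lex.right _ _ (Sigma.Lex.left _ _ ((hrQ' _ _ _).mp h))
        · obtain ⟨rfl, h3⟩ := Sigma.mk.inj_iff.mp (e.injective hfst)
          obtain rfl := eq_of_heq h3
          exact Sigma.Lex.right _ _ (Sigma.Lex.right _ _ hsnd)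

theorem scattered_sigma (P : Type) [LinearOrder P] (Q : P → Type) [∀ x, LinearOrder (Q x)]
    (hP : ScatteredRel P (· < ·)) (hQ : ∀ x, ScatteredRel (Q x) (· < ·)) :
    ScatteredRel (Σ x, Q x) (Sigma.Lex (· < ·) fun _ => (· < ·)) := by
  rintro ⟨S, ⟨A, hA, B, hB, hAB⟩, hdense⟩
  by_cases hfib : ∃ (x : P) (q q' : Q x), q < q' ∧ (⟨x, q⟩ : Σ x, Q x) ∈ S ∧
      (⟨x, q'⟩ : Σ x, Q x) ∈ S
  · obtain ⟨x, q, q', hqq, hq, hq'⟩ := hfib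
    refine hQ x ⟨{u : Q x | (⟨x, u⟩ : Σ x, Q x) ∈ S}, ⟨q, hq, q', hq', hqq⟩, ?_⟩
    intro u hu v hv huv
    obtain ⟨c, hc, h1, h2⟩ := hdense ⟨x, u⟩ hu ⟨x, v⟩ hv (Sigma.Lex.right _ _ huv)
    obtain ⟨x', w⟩ := c
    cases h1 with
    | left _ _ h1 =>
        cases h2 with
        | left _ _ h2 => exact absurd (h1.trans h2) (lt_irrefl x)
        | right _ _ h2 => exact absurd h1 (lt_irrefl x)
    | right _ _ h1 =>
        cases h2 with
        | left _ _ h2 => exact absurd h2 (lt_irrefl x)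
        | right _ _ h2 => exact ⟨_, hc, h1, h2⟩
  · push_neg at hfib
    refine hP ⟨{x : P | ∃ q, (⟨x, q⟩ : Σ x, Q x) ∈ S}, ?_, ?_⟩
    · obtain ⟨xa, qa⟩ := A
      obtain ⟨xb, qb⟩ := B
      refine ⟨xa, ⟨qa, hA⟩, xb, ⟨qb, hB⟩, ?_⟩
      cases hAB with
      | left _ _ h => exact h
      | right _ _ h => exact absurd hB (hfib _ _ _ h hA)
    · rintro x ⟨q, hq⟩ x' ⟨q', hq'⟩ hxx
      obtain ⟨c, hc, h1, h2⟩ := hdense ⟨x, q⟩ hq ⟨x', q'⟩ hq' (Sigma.Lex.left _ _ hxx)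
      obtain ⟨x'', w⟩ := c
      refine ⟨x'', ⟨w, hc⟩, ?_, ?_⟩
      · cases h1 with
        | left _ _ h => exact h
        | right _ _ h => exact absurd hc (hfib _ _ _ h hq)
      · cases h2 with
        | left _ _ h => exact h
        | right _ _ h => exact absurd hq' (hfib _ _ _ h hc)

/-- If `(P, <)` is a scattered countable linear ordering of Hausdorff rank `α` and
each `(Q_x, <_x)` is a scattered countable linear ordering of rank at most `β`,
then the generalized sum `Σ_{x ∈ P} Q_x` is scattered of rank at most `β + α`. -/
theorem hrank_generalized_sum (P : Type) [LinearOrder P] [Countable P]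
    (hP : ScatteredRel P (· < ·))
    (Q : P → Type) [∀ x, LinearOrder (Q x)] [∀ x, Countable (Q x)]
    (hQ : ∀ x, ScatteredRel (Q x) (· < ·))
    (α β : Ordinal.{0}) (hα : hrank P (· < ·) = α)
    (hβ : ∀ x, hrank (Q x) (· < ·) ≤ β) :
    ScatteredRel (Σ x, Q x) (Sigma.Lex (· < ·) fun _ => (· < ·)) ∧
    hrank (Σ x, Q x) (Sigma.Lex (· < ·) fun _ => (· < ·)) ≤ β + α := by
  refine ⟨scattered_sigma P Q hP hQ, ?_⟩
  have hPV : InV α P (· < ·) := by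
    have h1 : InV (hrank P (· < ·)) P (· < ·) := csInf_mem (exists_inV P hP)
    rwa [hα] at h1
  have hQV : ∀ x, InV β (Q x) (· < ·) := fun x =>
    (csInf_mem (exists_inV (Q x) (hQ x)) : InV (hrank (Q x) (· < ·)) (Q x) (· < ·)).mono (hβ x)
  exact csInf_le' (inV_sigma α P Q β hPV hQV)
end

section
/- If P is a scattered countable linear ordering of Hausdorff rank α > 0, then the geometric sum Σ_{n≥0} P^n (the ω-sum of the finite lexicographic powers of P) is scattered of rank at most α · ω (ordinal product). -/
/-- The `n`-fold lexicographic power of `P`: tuples of length `n` ordered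
lexicographically. -/
def finLexRel (P : Type) [LinearOrder P] (n : ℕ) :
    (Fin n → P) → (Fin n → P) → Prop :=
  fun f g => ∃ i, (∀ j, j < i → f j = g j) ∧ f i < g i

/-! ### Auxiliary lemmas -/

lemma sigma_lex_mk_iff {ι : Type} {r : ι → ι → Prop} {Q : ι → Type}
    {s : ∀ i, Q i → Q i → Prop} {n m : ι} {x : Q n} {y : Q m} :
    Sigma.Lex r s ⟨n, x⟩ ⟨m, y⟩ ↔ r n m ∨ ∃ h : n = m, s m (h.rec x) y :=
  Sigma.lex_iff

lemma sigma_lex_fiber {Q : ℤ → Type} {rQ : ∀ n, Q n → Q n → Prop} {n : ℤ} {x y : Q n} :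
    Sigma.Lex (· < ·) rQ ⟨n, x⟩ ⟨n, y⟩ ↔ rQ n x y := by
  rw [sigma_lex_mk_iff]
  constructor
  · rintro (h | ⟨h, hr⟩)
    · exact absurd h (lt_irrefl n)
    · exact hr
  · intro h
    exact Or.inr ⟨rfl, h⟩

lemma sigma_lex_const_iff {ι : Type} {r : ι → ι → Prop} {L : Type} {t : L → L → Prop}
    {a b : Σ _ : ι, L} :
    Sigma.Lex r (fun _ => t) a b ↔ r a.1 b.1 ∨ (a.1 = b.1 ∧ t a.2 b.2) := by
  obtain ⟨i, x⟩ := a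
  obtain ⟨j, y⟩ := b
  rw [sigma_lex_mk_iff]
  constructor
  · rintro (h | ⟨rfl, h⟩)
    · exact Or.inl h
    · exact Or.inr ⟨rfl, h⟩
  · rintro (h | ⟨rfl, h⟩)
    · exact Or.inl h
    · exact Or.inr ⟨rfl, h⟩

lemma InV_congr {a : Ordinal.{0}} {σ : Type} {r : σ → σ → Prop} (h : InV a σ r)
    (τ : Type) (s : τ → τ → Prop) (f : τ ≃ σ) (hf : ∀ x y, s x y ↔ r (f x) (f y)) :
    InV a τ s := by
  cases h with
  | zero σ r hsub =>
      haveI := hsub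
      exact InV.zero _ _ f.subsingleton
  | sum a Q rQ o ho h σ r e he =>
      refine InV.sum a Q rQ o ho h τ s (e.trans f.symm) (fun x y => ?_)
      rw [he x y, hf]
      simp

lemma InV_of_subsingleton (a : Ordinal.{0}) (σ : Type) (r : σ → σ → Prop)
    (h : Subsingleton σ) : InV a σ r := by
  rcases eq_zero_or_pos a with rfl | ha
  · exact InV.zero σ r h
  haveI := h
  refine InV.sum a (fun z => PLift (z = 0) × σ) (fun _ p q => r p.2 q.2)
    (fun _ => 0) (fun _ => ha) (fun z => InV.zero _ _ inferInstance) σ r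
    ⟨fun p => p.2.2, fun x => ⟨0, ⟨rfl⟩, x⟩, ?_, ?_⟩ ?_
  · rintro ⟨z, ⟨hz⟩, x⟩
    subst hz
    rfl
  · intro x
    rfl
  · rintro ⟨z, ⟨hz⟩, x⟩ ⟨w, ⟨hw⟩, y⟩
    subst hz
    subst hw
    constructor
    · intro h'
      rcases sigma_lex_mk_iff.mp h' with h'' | ⟨he', h''⟩
      · exact absurd h'' (lt_irrefl _)
      · exact h''
    · intro h'
      exact sigma_lex_mk_iff.mpr (Or.inr ⟨rfl, h'⟩)

lemma InV_sigma (γ : Ordinal.{0}) (L : Type) (t : L → L → Prop) (hL : InV γ L t) :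
    ∀ {β : Ordinal.{0}} {M : Type} {s : M → M → Prop}, InV β M s → Irreflexive s →
      InV (γ + β) (Σ _ : M, L) (Sigma.Lex s fun _ => t) := by
  intro β M s h
  induction h with
  | zero M s hsub =>
      intro hirr
      rw [add_zero]
      haveI := hsub
      by_cases hM : Nonempty M
      · obtain ⟨i0⟩ := hM
        refine InV_congr hL _ _
          ⟨fun p => p.2, fun y => ⟨i0, y⟩, ?_, fun y => rfl⟩ ?_
        · rintro ⟨i, x⟩
          obtain rfl : i0 = i := Subsingleton.elim _ _
          rfl
        · rintro ⟨i, x⟩ ⟨j, y⟩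
          simp only [Equiv.coe_fn_mk]
          rw [sigma_lex_const_iff]
          constructor
          · rintro (h | ⟨-, h⟩)
            · exact absurd (Subsingleton.elim i j ▸ h) (fun hh => hirr j hh)
            · exact h
          · intro h
            exact Or.inr ⟨Subsingleton.elim i j, h⟩
      · haveI : IsEmpty M := not_nonempty_iff.mp hM
        exact InV_of_subsingleton _ _ _ inferInstance
  | sum a Q rQ o ho h M s e he IH =>
      intro hirr
      have hirrQ : ∀ n, Irreflexive (rQ n) := by
        intro n x hx
        exact hirr _ ((he ⟨n, x⟩ ⟨n, x⟩).mp (sigma_lex_fiber.mpr hx))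
      refine InV.sum (γ + a) (fun n => Σ _ : Q n, L)
        (fun n => Sigma.Lex (rQ n) fun _ => t) (fun n => γ + o n)
        (fun n => (add_lt_add_iff_left γ).mpr (ho n)) (fun n => IH n (hirrQ n))
        _ _ ⟨fun p => ⟨e ⟨p.1, p.2.1⟩, p.2.2⟩,
             fun q => ⟨(e.symm q.1).1, (e.symm q.1).2, q.2⟩, ?_, ?_⟩ ?_
      · rintro ⟨n, j, u⟩
        show (⟨(e.symm (e ⟨n, j⟩)).1, (e.symm (e ⟨n, j⟩)).2, u⟩ :
          Σ n : ℤ, Σ _ : Q n, L) = ⟨n, j, u⟩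
        rw [e.symm_apply_apply]
      · rintro ⟨i, u⟩
        show (⟨e ⟨(e.symm i).1, (e.symm i).2⟩, u⟩ : Σ _ : M, L) = ⟨i, u⟩
        rw [show (⟨(e.symm i).1, (e.symm i).2⟩ : Σ n : ℤ, Q n) = e.symm i from rfl,
          e.apply_symm_apply]
      · rintro ⟨n, j, u⟩ ⟨m, k, v⟩
        simp only [Equiv.coe_fn_mk]
        rw [sigma_lex_const_iff, sigma_lex_mk_iff]
        constructor
        · rintro (hnm | ⟨rfl, hjk⟩)
          · exact Or.inl ((he ⟨n, j⟩ ⟨m, k⟩).mp (sigma_lex_mk_iff.mpr (Or.inl hnm)))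
          · rw [sigma_lex_const_iff] at hjk
            rcases hjk with hr | ⟨rfl, ht⟩
            · exact Or.inl ((he _ _).mp (sigma_lex_fiber.mpr hr))
            · exact Or.inr ⟨rfl, ht⟩
        · rintro (hr | ⟨heq, ht⟩)
          · rcases sigma_lex_mk_iff.mp ((he ⟨n, j⟩ ⟨m, k⟩).mpr hr) with h' | ⟨rfl, h'⟩
            · exact Or.inl h'
            · exact Or.inr ⟨rfl, sigma_lex_const_iff.mpr (Or.inl h')⟩
          · have hs : (⟨n, j⟩ : Σ n, Q n) = ⟨m, k⟩ := e.injective heq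
            obtain ⟨rfl, hjk⟩ := Sigma.mk.inj_iff.mp hs
            obtain rfl := eq_of_heq hjk
            exact Or.inr ⟨rfl, sigma_lex_const_iff.mpr (Or.inr ⟨rfl, ht⟩)⟩

lemma InV_pow (P : Type) [LinearOrder P] (α : Ordinal.{0}) (hαP : InV α P (· < ·)) :
    ∀ n : ℕ, InV (α * n) (Fin n → P) (finLexRel P n) := by
  intro n
  induction n with
  | zero =>
      rw [Nat.cast_zero, mul_zero]
      exact InV.zero _ _ ⟨fun f g => funext fun i => i.elim0⟩
  | succ n IH =>
      have hstep := InV_sigma (α * n) (Fin n → P) (finLexRel P n) IH hαP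
        (fun x => lt_irrefl x)
      have harith : α * ((n + 1 : ℕ) : Ordinal) = α * n + α := by
        rw [Nat.cast_succ, Ordinal.add_one_eq_succ, Ordinal.mul_succ]
      rw [harith]
      refine InV_congr hstep _ _
        ⟨fun g => ⟨g 0, fun i => g i.succ⟩, fun p => Fin.cons p.1 p.2, ?_, ?_⟩ ?_
      · intro g
        funext i
        refine Fin.cases ?_ ?_ i
        · simp
        · intro j
          simp
      · rintro ⟨p, f⟩
        simp
      · intro g g'
        simp only [Equiv.coe_fn_mk]
        rw [sigma_lex_const_iff]
        constructor
        · rintro ⟨i, hpre, hlt⟩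
          rcases Fin.eq_zero_or_eq_succ i with rfl | ⟨i', rfl⟩
          · exact Or.inl hlt
          · refine Or.inr ⟨hpre 0 (Fin.succ_pos i'), ⟨i', ?_, hlt⟩⟩
            intro j hj
            exact hpre j.succ (Fin.succ_lt_succ_iff.mpr hj)
        · rintro (h | ⟨h0, i, hpre, hlt⟩)
          · exact ⟨0, fun j hj => absurd hj (Fin.not_lt_zero j), h⟩
          · refine ⟨i.succ, ?_, hlt⟩
            intro j hj
            rcases Fin.eq_zero_or_eq_succ j with rfl | ⟨j', rfl⟩
            · exact h0
            · exact hpre j' (Fin.succ_lt_succ_iff.mp hj)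

lemma scattered_of_InV : ∀ {a : Ordinal.{0}} {σ : Type} {r : σ → σ → Prop},
    InV a σ r → Transitive r → Irreflexive r → ScatteredRel σ r := by
  intro a σ r h
  induction h with
  | zero σ r hsub =>
      rintro _ hirr ⟨S, ⟨x, hx, y, hy, hxy⟩, -⟩
      haveI := hsub
      obtain rfl := Subsingleton.elim x y
      exact hirr x hxy
  | sum a Q rQ o ho h σ r e he IH =>
      rintro htr hirr ⟨S, ⟨x0, hx0, y0, hy0, hxy0⟩, hdense⟩
      have hfib : ∀ (n : ℤ) (x y : Q n), rQ n x y ↔ r (e ⟨n, x⟩) (e ⟨n, y⟩) := by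
        intro n x y
        rw [← he]
        exact sigma_lex_fiber.symm
      have htrQ : ∀ n, Transitive (rQ n) := fun n x y z hxy hyz =>
        (hfib n x z).mpr (htr ((hfib n x y).mp hxy) ((hfib n y z).mp hyz))
      have hirrQ : ∀ n, Irreflexive (rQ n) := fun n x hx => hirr _ ((hfib n x x).mp hx)
      set T : Set (Σ n, Q n) := {u | e u ∈ S} with hT
      have hTdense : ∀ u ∈ T, ∀ v ∈ T, Sigma.Lex (· < ·) rQ u v →
          ∃ w ∈ T, Sigma.Lex (· < ·) rQ u w ∧ Sigma.Lex (· < ·) rQ w v := by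
        intro u hu v hv huv
        obtain ⟨c, hc, h1, h2⟩ := hdense (e u) hu (e v) hv ((he u v).mp huv)
        refine ⟨e.symm c, ?_, ?_, ?_⟩
        · simp only [hT, Set.mem_setOf_eq, Equiv.apply_symm_apply]
          exact hc
        · rw [he]
          simpa using h1
        · rw [he]
          simpa using h2
      have hfiber : ∀ (n : ℤ) (x y : Q n), (⟨n, x⟩ : Σ n, Q n) ∈ T →
          (⟨n, y⟩ : Σ n, Q n) ∈ T → rQ n x y → False := by
        intro n x y hx hy hxy
        refine IH n (htrQ n) (hirrQ n)
          ⟨{z | (⟨n, z⟩ : Σ n, Q n) ∈ T}, ⟨x, hx, y, hy, hxy⟩, ?_⟩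
        intro u hu v hv huv
        obtain ⟨w, hw, h1, h2⟩ := hTdense ⟨n, u⟩ hu ⟨n, v⟩ hv (sigma_lex_fiber.mpr huv)
        obtain ⟨k, z⟩ := w
        rcases sigma_lex_mk_iff.mp h1 with hnk | ⟨h1e, h1r⟩
        · exfalso
          rcases sigma_lex_mk_iff.mp h2 with hkn | ⟨h2e, -⟩
          · exact absurd (hnk.trans hkn) (lt_irrefl _)
          · exact absurd (h2e ▸ hnk) (lt_irrefl _)
        · subst h1e
          rcases sigma_lex_mk_iff.mp h2 with hkn | ⟨h2e, h2r⟩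
          · exact absurd hkn (lt_irrefl _)
          · exact ⟨z, hw, h1r, h2r⟩
      have hgap : ∀ d : ℕ, ∀ u v : (Σ n, Q n), u ∈ T → v ∈ T →
          Sigma.Lex (· < ·) rQ u v → (v.1 - u.1).toNat ≤ d → False := by
        intro d
        induction d with
        | zero =>
            rintro ⟨n, x⟩ ⟨m, y⟩ hx hy hL hle
            have hle' : (m - n).toNat ≤ 0 := hle
            rcases sigma_lex_mk_iff.mp hL with h' | ⟨h'e, h'⟩
            · omega
            · subst h'e
              exact hfiber _ _ _ hx hy h'
        | succ d IHd =>
            rintro ⟨n, x⟩ ⟨m, y⟩ hx hy hL hle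
            have hle' : (m - n).toNat ≤ d + 1 := hle
            rcases sigma_lex_mk_iff.mp hL with hnm | ⟨h'e, h'⟩
            · obtain ⟨w, hw, h1, h2⟩ := hTdense ⟨n, x⟩ hx ⟨m, y⟩ hy
                (sigma_lex_mk_iff.mpr (Or.inl hnm))
              obtain ⟨k, z⟩ := w
              rcases sigma_lex_mk_iff.mp h1 with hnk | ⟨h1e, h1r⟩
              · refine IHd ⟨k, z⟩ ⟨m, y⟩ hw hy h2 ?_
                have hkm : k ≤ m := by
                  rcases sigma_lex_mk_iff.mp h2 with h'' | ⟨h''e, -⟩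
                  · exact le_of_lt h''
                  · exact le_of_eq h''e
                show (m - k).toNat ≤ d
                omega
              · subst h1e
                exact hfiber _ _ _ hx hw h1r
            · subst h'e
              exact hfiber _ _ _ hx hy h'
      refine hgap ((e.symm y0).1 - (e.symm x0).1).toNat (e.symm x0) (e.symm y0)
        ?_ ?_ ?_ le_rfl
      · simp only [hT, Set.mem_setOf_eq, Equiv.apply_symm_apply]
        exact hx0
      · simp only [hT, Set.mem_setOf_eq, Equiv.apply_symm_apply]
        exact hy0
      · rw [he]
        simpa using hxy0

lemma finLexRel_trans (P : Type) [LinearOrder P] (n : ℕ) : Transitive (finLexRel P n) := by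
  rintro f g h ⟨i, hpre1, hlt1⟩ ⟨j, hpre2, hlt2⟩
  rcases lt_trichotomy i j with hij | rfl | hji
  · exact ⟨i, fun k hk => (hpre1 k hk).trans (hpre2 k (hk.trans hij)),
      lt_of_lt_of_le hlt1 (le_of_eq (hpre2 i hij))⟩
  · exact ⟨i, fun k hk => (hpre1 k hk).trans (hpre2 k hk), hlt1.trans hlt2⟩
  · exact ⟨j, fun k hk => (hpre1 k (hk.trans hji)).trans (hpre2 k hk),
      lt_of_le_of_lt (le_of_eq (hpre1 j hji)) hlt2⟩

/-- If `P` is a scattered countable linear ordering of Hausdorff rank `α > 0`, then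
the geometric sum `Σ_{n ≥ 0} P^n` is scattered of rank at most `α · ω`. -/
theorem hrank_geometric_sum (P : Type) [LinearOrder P] [Countable P]
    (hP : ScatteredRel P (· < ·)) (α : Ordinal.{0})
    (hα : hrank P (· < ·) = α) (h0 : 0 < α) :
    ScatteredRel (Σ n : ℕ, Fin n → P) (Sigma.Lex (· < ·) fun n => finLexRel P n) ∧
    hrank (Σ n : ℕ, Fin n → P) (Sigma.Lex (· < ·) fun n => finLexRel P n) ≤
      α * Ordinal.omega0 := by
  have hα' : sInf {a | InV a P (· < ·)} = α := hα
  have hne : {a | InV a P (· < ·)}.Nonempty := by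
    by_contra h
    rw [Set.not_nonempty_iff_eq_empty] at h
    rw [h, Ordinal.sInf_empty] at hα'
    exact absurd hα'.symm (ne_of_gt h0)
  have hmem : InV α P (· < ·) := hα' ▸ csInf_mem hne
  have hpow := InV_pow P α hmem
  have hbig : InV (α * Ordinal.omega0) (Σ n : ℕ, Fin n → P)
      (Sigma.Lex (· < ·) fun n => finLexRel P n) := by
    refine InV.sum (α * Ordinal.omega0)
      (fun z => match z with | Int.ofNat n => (Fin n → P) | Int.negSucc _ => PEmpty)
      (fun z => match z with
        | Int.ofNat n => finLexRel P n
        | Int.negSucc _ => fun _ _ => False)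
      (fun z => match z with | Int.ofNat n => α * n | Int.negSucc _ => 0)
      ?_ ?_ _ _
      ⟨fun p => match p with
        | ⟨Int.ofNat n, f⟩ => ⟨n, f⟩
        | ⟨Int.negSucc _, x⟩ => x.elim,
       fun q => ⟨Int.ofNat q.1, q.2⟩, ?_, ?_⟩ ?_
    · rintro (n | n)
      · exact mul_lt_mul_of_pos_left (Ordinal.nat_lt_omega0 n) h0
      · exact mul_pos h0 Ordinal.omega0_pos
    · rintro (n | n)
      · exact hpow n
      · exact InV.zero _ _ inferInstance
    · rintro ⟨(n | n), f⟩
      · rfl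
      · exact f.elim
    · rintro ⟨n, f⟩
      rfl
    · rintro ⟨(n | n), f⟩ ⟨(m | m), g⟩
      · constructor
        · intro h'
          rcases sigma_lex_mk_iff.mp h' with h'' | ⟨hnm, h''⟩
          · exact Sigma.Lex.left _ _ (Int.ofNat_lt.mp h'')
          · obtain rfl : n = m := Int.ofNat_inj.mp hnm
            exact Sigma.Lex.right _ _ h''
        · intro h'
          rcases sigma_lex_mk_iff.mp h' with h'' | ⟨hnm, h''⟩
          · exact Sigma.Lex.left _ _ (Int.ofNat_lt.mpr h'')
          · obtain rfl : n = m := hnm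
            exact Sigma.Lex.right _ _ h''
      · exact g.elim
      · exact f.elim
      · exact f.elim
  have hirr : Irreflexive (Sigma.Lex (· < ·) fun n => finLexRel P n) := by
    rintro ⟨n, f⟩ h'
    rcases sigma_lex_mk_iff.mp h' with h'' | ⟨heq, h''⟩
    · exact absurd h'' (lt_irrefl n)
    · obtain ⟨i, -, hlt⟩ :
        ∃ i, (∀ j, j < i → f j = f j) ∧ f i < f i := h''
      exact absurd hlt (lt_irrefl (f i))
  have htrans : Transitive (Sigma.Lex (· < ·) fun n => finLexRel P n) := by
    rintro ⟨n, f⟩ ⟨m, g⟩ ⟨k, h'⟩ h1 h2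
    rcases sigma_lex_mk_iff.mp h1 with a1 | ⟨rfl, a1⟩ <;>
      rcases sigma_lex_mk_iff.mp h2 with a2 | ⟨rfl, a2⟩
    · exact sigma_lex_mk_iff.mpr (Or.inl (a1.trans a2))
    · exact sigma_lex_mk_iff.mpr (Or.inl a1)
    · exact sigma_lex_mk_iff.mpr (Or.inl a2)
    · exact sigma_lex_mk_iff.mpr (Or.inr ⟨rfl, finLexRel_trans P _ a1 a2⟩)
  exact ⟨scattered_of_InV hbig htrans hirr, csInf_le' hbig⟩
end

section
/- The least collection of countable ordinals containing 0 and 1 that is closed under ordinal sum, ordinal product, and the ω-power operation α ↦ α^ω consists exactly of the ordinals less than ω^(ω^ω). -/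
open Ordinal Cardinal

private lemma aux_opow_nat_lt_ord {a : Ordinal.{0}} (ha : a < (aleph 1).ord) (n : ℕ) :
    a ^ (n : Ordinal) < (aleph 1).ord := by
  induction n with
  | zero =>
    rw [Nat.cast_zero, opow_zero, Cardinal.lt_ord, Ordinal.card_one]
    exact one_lt_aleph0.trans_le (aleph0_le_aleph 1)
  | succ n ih =>
    rw [Nat.cast_succ, ← Order.succ_eq_add_one, opow_succ]
    rw [Cardinal.lt_ord, Ordinal.card_mul]
    exact Cardinal.mul_lt_of_lt (aleph0_le_aleph 1) (Cardinal.lt_ord.1 ih) (Cardinal.lt_ord.1 ha)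

private lemma aux_opow_omega0_lt_ord {a : Ordinal.{0}} (ha : a < (aleph 1).ord) :
    a ^ omega0 < (aleph 1).ord := by
  rcases eq_or_ne a 0 with rfl | h0
  · rw [zero_opow omega0_ne_zero]
    exact (aux_opow_nat_lt_ord ha 0).trans_le' (by simp)
  · calc a ^ omega0 ≤ ⨆ n : ℕ, a ^ (n : Ordinal) := by
          rw [opow_le_of_isSuccLimit h0 isSuccLimit_omega0]
          intro b hb
          obtain ⟨n, rfl⟩ := lt_omega0.1 hb
          exact Ordinal.le_iSup (fun n : ℕ => a ^ (n : Ordinal)) n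
       _ < (aleph 1).ord := by
          rw [ord_aleph]
          exact Ordinal.iSup_lt_omega_one fun n => by rw [← ord_aleph]; exact aux_opow_nat_lt_ord ha n

private lemma aux_omega0_lt_ord : (omega0 : Ordinal.{0}) < (aleph 1).ord := by
  rw [Cardinal.lt_ord, card_omega0]
  exact aleph0_lt_aleph_one

private lemma aux_towers_lt_ord (n : ℕ) :
    (omega0 : Ordinal.{0}) ^ (omega0 ^ (n : Ordinal)) < (aleph 1).ord := by
  induction n with
  | zero => simpa using aux_omega0_lt_ord
  | succ n ih =>
    have : (omega0 : Ordinal.{0}) ^ (omega0 ^ ((n : Ordinal) + 1)) =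
        (omega0 ^ (omega0 ^ (n : Ordinal))) ^ omega0 := by
      rw [← opow_mul, ← Order.succ_eq_add_one, opow_succ]
    rw [Nat.cast_succ, this]
    exact aux_opow_omega0_lt_ord ih

private lemma aux_top_lt_ord : (omega0 : Ordinal.{0}) ^ (omega0 ^ omega0) < (aleph 1).ord := by
  have h1 : (omega0 : Ordinal.{0}) ^ (omega0 ^ omega0) ≤
      ⨆ n : ℕ, (omega0 : Ordinal.{0}) ^ (omega0 ^ (n : Ordinal)) := by
    rw [opow_le_of_isSuccLimit omega0_ne_zero (isSuccLimit_opow one_lt_omega0 isSuccLimit_omega0)]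
    intro c hc
    obtain ⟨d, hd, hcd⟩ := (lt_opow_of_isSuccLimit omega0_ne_zero isSuccLimit_omega0).1 hc
    obtain ⟨n, rfl⟩ := lt_omega0.1 hd
    exact (opow_le_opow_right omega0_pos hcd.le).trans
      (Ordinal.le_iSup (fun n : ℕ => (omega0 : Ordinal.{0}) ^ (omega0 ^ (n : Ordinal))) n)
  exact h1.trans_lt (by rw [ord_aleph]; exact Ordinal.iSup_lt_omega_one fun n => by rw [← ord_aleph]; exact aux_towers_lt_ord n)

/-- closure of `{a | a < ω^ω^ω}` under `α ↦ α ^ ω`. -/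
private lemma aux_opow_omega0_mem {a : Ordinal.{0}} (ha : a < omega0 ^ (omega0 ^ omega0)) :
    a ^ omega0 < omega0 ^ (omega0 ^ omega0) := by
  obtain ⟨c, hc, hac⟩ :=
    (lt_opow_of_isSuccLimit omega0_ne_zero (isSuccLimit_opow one_lt_omega0 isSuccLimit_omega0)).1 ha
  calc a ^ omega0 ≤ (omega0 ^ c) ^ omega0 := opow_le_opow_left _ hac.le
    _ = omega0 ^ (c * omega0) := by rw [opow_mul]
    _ < omega0 ^ (omega0 ^ omega0) := by
        rw [opow_lt_opow_iff_right one_lt_omega0]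
        have hP := principal_mul_omega0_opow_opow 1
        rw [opow_one] at hP
        have hωω : (omega0 : Ordinal.{0}) < omega0 ^ omega0 := by
          conv_lhs => rw [← opow_one (omega0 : Ordinal.{0})]
          exact (opow_lt_opow_iff_right one_lt_omega0).2 one_lt_omega0
        exact hP hc hωω

section Hard

variable {C : Set Ordinal.{0}} (h0 : 0 ∈ C) (h1 : 1 ∈ C)
  (hadd : ∀ a ∈ C, ∀ b ∈ C, a + b ∈ C) (hmul : ∀ a ∈ C, ∀ b ∈ C, a * b ∈ C)
  (hpow : ∀ a ∈ C, a ^ omega0 ∈ C)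

include h0 h1 hadd in
private lemma aux_nat_mem (n : ℕ) : (n : Ordinal) ∈ C := by
  induction n with
  | zero => exact h0
  | succ n ih => rw [Nat.cast_succ]; exact hadd _ ih _ h1

include h1 hmul in
private lemma aux_natpow_mem {x : Ordinal} (hx : x ∈ C) (n : ℕ) : x ^ (n : Ordinal) ∈ C := by
  induction n with
  | zero => simpa using h1
  | succ n ih =>
    rw [Nat.cast_succ, ← Order.succ_eq_add_one, opow_succ]
    exact hmul _ ih _ hx

include h0 h1 hadd hpow in
private lemma aux_omega0_mem : (omega0 : Ordinal.{0}) ∈ C := by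
  have h2 : ((2 : ℕ) : Ordinal.{0}) ∈ C := aux_nat_mem h0 h1 hadd 2
  have := hpow _ h2
  rwa [natCast_opow_omega0 one_lt_two] at this

include h0 h1 hadd hmul hpow in
private lemma aux_tower_mem (n : ℕ) : (omega0 : Ordinal.{0}) ^ (omega0 ^ (n : Ordinal)) ∈ C := by
  induction n with
  | zero => simpa using aux_omega0_mem h0 h1 hadd hpow
  | succ n ih =>
    have : (omega0 : Ordinal.{0}) ^ (omega0 ^ ((n : Ordinal) + 1)) =
        (omega0 ^ (omega0 ^ (n : Ordinal))) ^ omega0 := by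
      rw [← opow_mul, ← Order.succ_eq_add_one, opow_succ]
    rw [Nat.cast_succ, this]
    exact hpow _ ih

include h0 h1 hadd hmul hpow in
private lemma aux_opow_mem (n : ℕ) : ∀ b < (omega0 : Ordinal.{0}) ^ (n : Ordinal),
    (omega0 : Ordinal.{0}) ^ b ∈ C := by
  induction n with
  | zero =>
    intro b hb
    rw [Nat.cast_zero, opow_zero, Ordinal.lt_one_iff_zero] at hb
    subst hb
    rw [opow_zero]
    exact h1
  | succ n ih =>
    intro b hb
    have hω : ((omega0 : Ordinal.{0}) ^ (n : Ordinal)) ≠ 0 := opow_ne_zero _ omega0_ne_zero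
    have hk : b / omega0 ^ (n : Ordinal) < omega0 := by
      rw [div_lt hω, ← opow_succ, Order.succ_eq_add_one, ← Nat.cast_succ]
      exact hb
    obtain ⟨m, hm⟩ := lt_omega0.1 hk
    have hr : b % omega0 ^ (n : Ordinal) < omega0 ^ (n : Ordinal) := mod_lt _ hω
    have hdecomp : b = omega0 ^ (n : Ordinal) * (m : Ordinal) + b % omega0 ^ (n : Ordinal) := by
      conv_lhs => rw [← div_add_mod b (omega0 ^ (n : Ordinal))]
      rw [hm]
    rw [hdecomp, opow_add, opow_mul]
    exact hmul _ (aux_natpow_mem h1 hmul (aux_tower_mem h0 h1 hadd hmul hpow n) m) _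
      (ih _ hr)

include h0 h1 hadd hmul hpow in
private lemma aux_all_mem : ∀ a < (omega0 : Ordinal.{0}) ^ (omega0 ^ omega0), a ∈ C := by
  intro a
  induction a using Ordinal.induction with
  | h a IH =>
    intro ha
    rcases eq_or_ne a 0 with rfl | ha0
    · exact h0
    have hlog : log omega0 a < omega0 ^ omega0 :=
      (lt_opow_iff_log_lt one_lt_omega0 ha0).1 ha
    have hωb : (omega0 : Ordinal.{0}) ^ log omega0 a ∈ C := by
      obtain ⟨d, hd, hbd⟩ := (lt_opow_of_isSuccLimit omega0_ne_zero isSuccLimit_omega0).1 hlog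
      obtain ⟨n, rfl⟩ := lt_omega0.1 hd
      exact aux_opow_mem h0 h1 hadd hmul hpow n _ hbd
    have hωlog : (omega0 : Ordinal.{0}) ^ log omega0 a ≠ 0 := opow_ne_zero _ omega0_ne_zero
    obtain ⟨m, hm⟩ := lt_omega0.1 (div_opow_log_lt a one_lt_omega0)
    have hr : a % omega0 ^ log omega0 a < a :=
      (mod_lt _ hωlog).trans_le (opow_log_le_self _ ha0)
    have hrC : a % omega0 ^ log omega0 a ∈ C := IH _ hr (hr.trans ha)
    have hdecomp : a = omega0 ^ log omega0 a * (m : Ordinal) + a % omega0 ^ log omega0 a := by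
      conv_lhs => rw [← div_add_mod a (omega0 ^ log omega0 a)]
      rw [hm]
    rw [hdecomp]
    exact hadd _ (hmul _ hωb _ (aux_nat_mem h0 h1 hadd m)) _ hrC

end Hard

open Ordinal in
/-- The least collection of countable ordinals containing `0` and `1` that is
closed under ordinal sum, ordinal product, and the `ω`-power operation
`α ↦ α ^ ω` consists exactly of the ordinals less than `ω ^ ω ^ ω`. -/
theorem sInter_closed_eq_lt_omega0_opow_omega0_opow_omega0 :
    ⋂₀ {C : Set Ordinal.{0} |
        C ⊆ {a | a < (Cardinal.aleph 1).ord} ∧ 0 ∈ C ∧ 1 ∈ C ∧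
        (∀ a ∈ C, ∀ b ∈ C, a + b ∈ C) ∧ (∀ a ∈ C, ∀ b ∈ C, a * b ∈ C) ∧
        (∀ a ∈ C, a ^ omega0 ∈ C)} =
      {a : Ordinal.{0} | a < omega0 ^ (omega0 ^ omega0)} := by
  apply Set.Subset.antisymm
  · apply Set.sInter_subset_of_mem
    refine ⟨fun a ha => ha.trans aux_top_lt_ord, ?_, ?_, ?_, ?_, ?_⟩
    · exact opow_pos _ omega0_pos
    · exact one_lt_omega0.trans_le (left_le_opow _ (opow_pos _ omega0_pos))
    · exact fun a ha b hb => principal_add_omega0_opow _ ha hb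
    · exact fun a ha b hb => principal_mul_omega0_opow_opow _ ha hb
    · exact fun a ha => aux_opow_omega0_mem ha
  · intro a ha C hC
    obtain ⟨-, h0, h1, hadd, hmul, hpow⟩ := hC
    exact aux_all_mem h0 h1 hadd hmul hpow a ha
end

section
/- If P_0 is a linear ordering and P, Q ⊆ P_0 are suborderings (with the induced order) that are both scattered, then P ∪ Q (with the induced order) is scattered. -/
def DenseSet {P₀ : Type} [LinearOrder P₀] (A : Set P₀) : Prop :=
  (∃ a ∈ A, ∃ b ∈ A, a < b) ∧ ∀ a ∈ A, ∀ b ∈ A, a < b → ∃ c ∈ A, a < c ∧ c < b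

lemma scattered_iff {P₀ : Type} [LinearOrder P₀] (P : Set P₀) :
    ScatteredRel ↥P (· < ·) ↔ ¬ ∃ A : Set P₀, A ⊆ P ∧ DenseSet A := by
  constructor
  · rintro h ⟨A, hA, ⟨a, ha, b, hb, hab⟩, hd⟩
    exact h ⟨{x : ↥P | x.1 ∈ A}, ⟨⟨a, hA ha⟩, ha, ⟨b, hA hb⟩, hb, hab⟩,
      fun x hx y hy hxy => by
        obtain ⟨c, hc, h1, h2⟩ := hd x hx y hy hxy
        exact ⟨⟨c, hA hc⟩, hc, h1, h2⟩⟩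
  · rintro h ⟨S, ⟨a, ha, b, hb, hab⟩, hd⟩
    refine h ⟨Subtype.val '' S, ?_, ⟨a, ⟨a, ha, rfl⟩, b, ⟨b, hb, rfl⟩, hab⟩, ?_⟩
    · rintro x ⟨y, _, rfl⟩; exact y.2
    · rintro x ⟨x', hx', rfl⟩ y ⟨y', hy', rfl⟩ hxy
      obtain ⟨c, hc, h1, h2⟩ := hd x' hx' y' hy' hxy
      exact ⟨c.1, ⟨c, hc, rfl⟩, h1, h2⟩

/-- If `P, Q ⊆ P₀` are scattered suborderings of a linear ordering `P₀`, then
`P ∪ Q` (with the induced order) is scattered. -/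
theorem scattered_union (P₀ : Type) [LinearOrder P₀] (P Q : Set P₀)
    (hP : ScatteredRel ↥P (· < ·)) (hQ : ScatteredRel ↥Q (· < ·)) :
    ScatteredRel ↥(P ∪ Q) (· < ·) := by
  rw [scattered_iff] at hP hQ ⊢
  rintro ⟨A, hA, ⟨a0, ha0, b0, hb0, hab0⟩, hd⟩
  by_cases hQfree : ∃ a ∈ A, ∃ b ∈ A, a < b ∧ ∀ c ∈ A, a < c → c < b → c ∉ Q
  · obtain ⟨a, ha, b, hb, hab, hfree⟩ := hQfree
    apply hP
    refine ⟨{c | c ∈ A ∧ a < c ∧ c < b}, ?_, ?_, ?_⟩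
    · rintro c ⟨hc, h1, h2⟩
      rcases hA hc with hp | hq
      · exact hp
      · exact absurd hq (hfree c hc h1 h2)
    · obtain ⟨c, hc, hac, hcb⟩ := hd a ha b hb hab
      obtain ⟨d, hd', hadd, hdc⟩ := hd a ha c hc hac
      exact ⟨d, ⟨hd', hadd, hdc.trans hcb⟩, c, ⟨hc, hac, hcb⟩, hdc⟩
    · rintro x ⟨hx, h1, h2⟩ y ⟨hy, h3, h4⟩ hxy
      obtain ⟨c, hc, hxc, hcy⟩ := hd x hx y hy hxy
      exact ⟨c, ⟨hc, h1.trans hxc, hcy.trans h4⟩, hxc, hcy⟩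
  · push_neg at hQfree
    apply hQ
    refine ⟨A ∩ Q, fun x hx => hx.2, ?_, ?_⟩
    · obtain ⟨c, hc, hac, hcb, hcQ⟩ := hQfree a0 ha0 b0 hb0 hab0
      obtain ⟨d, hdA, had, hdc, hdQ⟩ := hQfree a0 ha0 c hc hac
      exact ⟨d, ⟨hdA, hdQ⟩, c, ⟨hc, hcQ⟩, hdc⟩
    · rintro x ⟨hx, _⟩ y ⟨hy, _⟩ hxy
      obtain ⟨c, hc, hxc, hcy, hcQ⟩ := hQfree x hx y hy hxy
      exact ⟨c, ⟨hc, hcQ⟩, hxc, hcy⟩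
end

section
/- Every countable linear ordering is isomorphic to the lexicographic ordering (L, <_ℓ) of some prefix language L ⊆ {0,1}*. -/
/-- A prefix language: no word is a proper prefix of another word of the language. -/
def IsPrefixLanguage (L : Set (List Bool)) : Prop :=
  ∀ u ∈ L, ∀ v ∈ L, u <+: v → u = v

namespace PrefLang

/-- encode a path: duplicate each letter, append marker `[false, true]`. -/
def E : List Bool → List Bool
  | [] => [false, true]
  | a :: p => a :: a :: E p

lemma E_append (p q : List Bool) : E (p ++ q) = (p.flatMap fun b => [b, b]) ++ E q := by
  induction p with
  | nil => simp [E]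
  | cons a p ih => simp [E, ih]

lemma E_inj_of_prefix : ∀ p q : List Bool, E p <+: E q → p = q := by
  intro p
  induction p with
  | nil =>
    intro q h
    cases q with
    | nil => rfl
    | cons b q =>
      exfalso
      rcases h with ⟨t, ht⟩
      cases b <;> simp [E] at ht
  | cons a p ih =>
    intro q h
    cases q with
    | nil =>
      exfalso
      have h1 := h.length_le
      cases p <;> simp [E] at h1
    | cons b q =>
      simp only [E, List.cons_prefix_cons] at h
      obtain ⟨rfl, -, h⟩ := h
      rw [ih q h]

lemma lex_append (l : List Bool) {u v : List Bool} (h : List.Lex (· < ·) u v) :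
    List.Lex (· < ·) (l ++ u) (l ++ v) := by
  induction l with
  | nil => exact h
  | cons a l ih => exact List.Lex.cons ih

lemma L1 (p t : List Bool) : List.Lex (· < ·) (E (p ++ false :: t)) (E p) := by
  have : E p = (p.flatMap fun b => [b,b]) ++ E [] := by simpa using E_append p []
  rw [E_append, this]
  exact lex_append _ (by exact List.Lex.cons (List.Lex.rel (by decide)))

lemma L2 (p t : List Bool) : List.Lex (· < ·) (E p) (E (p ++ true :: t)) := by
  have : E p = (p.flatMap fun b => [b,b]) ++ E [] := by simpa using E_append p []
  rw [E_append, this]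
  exact lex_append _ (List.Lex.rel (by decide))

lemma L3 (c a b : List Bool) :
    List.Lex (· < ·) (E (c ++ false :: a)) (E (c ++ true :: b)) := by
  rw [E_append, E_append]
  exact lex_append _ (List.Lex.rel (by decide))

lemma lex_iff_lt {u v : List Bool} : List.Lex (· < ·) u v ↔ u < v := Iff.rfl

/-- trichotomy of words -/
lemma word_trichotomy : ∀ p q : List Bool, p <+: q ∨ q <+: p ∨
    ∃ c a t b s, a ≠ b ∧ p = c ++ a :: t ∧ q = c ++ b :: s := by
  intro p
  induction p with
  | nil => intro q; exact Or.inl (List.nil_prefix)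
  | cons a p ih =>
    intro q
    cases q with
    | nil => exact Or.inr (Or.inl List.nil_prefix)
    | cons b q =>
      by_cases hab : a = b
      · subst hab
        rcases ih q with h | h | ⟨c, x, t, y, s, hxy, rfl, rfl⟩
        · exact Or.inl (List.cons_prefix_cons.2 ⟨rfl, h⟩)
        · exact Or.inr (Or.inl (List.cons_prefix_cons.2 ⟨rfl, h⟩))
        · exact Or.inr (Or.inr ⟨a :: c, x, t, y, s, hxy, rfl, rfl⟩)
      · exact Or.inr (Or.inr ⟨[], a, p, b, q, hab, rfl, rfl⟩)

abbrev D : Type := ↥(Set.range E)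

instance : Countable D := by
  have : (Set.range E).Countable := Set.countable_range E
  exact this.to_subtype

instance : Nonempty D := ⟨⟨E [], ⟨[], rfl⟩⟩⟩

instance : NoMaxOrder D := by
  constructor
  rintro ⟨-, p, rfl⟩
  exact ⟨⟨E (p ++ [true]), ⟨_, rfl⟩⟩, by
    show List.Lex (· < ·) _ _; exact L2 p []⟩

instance : NoMinOrder D := by
  constructor
  rintro ⟨-, p, rfl⟩
  exact ⟨⟨E (p ++ [false]), ⟨_, rfl⟩⟩, by
    show List.Lex (· < ·) _ _; exact L1 p []⟩

instance : DenselyOrdered D := by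
  constructor
  rintro ⟨-, p, rfl⟩ ⟨-, q, rfl⟩ hlt
  change List.Lex (· < ·) (E p) (E q) at hlt
  rcases word_trichotomy p q with h | h | ⟨c, a, t, b, s, hab, rfl, rfl⟩
  · -- p prefix of q
    obtain ⟨m, rfl⟩ := h
    cases m with
    | nil => simp at hlt
    | cons x s =>
      cases x with
      | false => exact absurd (lt_trans (lex_iff_lt.1 hlt) (lex_iff_lt.1 (L1 p s))) (lt_irrefl _)
      | true =>
        refine ⟨⟨E ((p ++ true :: s) ++ [false]), ⟨_, rfl⟩⟩, ?_, ?_⟩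
        · show List.Lex (· < ·) _ _
          rw [List.append_assoc, List.cons_append]
          exact L2 p (s ++ [false])
        · show List.Lex (· < ·) _ _
          exact L1 _ []
  · -- q prefix of p
    obtain ⟨m, rfl⟩ := h
    cases m with
    | nil => simp at hlt
    | cons x s =>
      cases x with
      | true => exact absurd (lt_trans (lex_iff_lt.1 hlt) (lex_iff_lt.1 (L2 q s))) (lt_irrefl _)
      | false =>
        refine ⟨⟨E ((q ++ false :: s) ++ [true]), ⟨_, rfl⟩⟩, ?_, ?_⟩
        · show List.Lex (· < ·) _ _
          exact L2 _ []
        · show List.Lex (· < ·) _ _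
          rw [List.append_assoc, List.cons_append]
          exact L1 q (s ++ [true])
  · -- differ at first index
    have hab' : a = false ∧ b = true := by
      rcases a <;> rcases b <;> simp_all
      exact absurd (lt_trans (lex_iff_lt.1 hlt) (lex_iff_lt.1 (L3 c s t))) (lt_irrefl _)
    obtain ⟨rfl, rfl⟩ := hab'
    refine ⟨⟨E ((c ++ false :: t) ++ [true]), ⟨_, rfl⟩⟩, ?_, ?_⟩
    · show List.Lex (· < ·) _ _
      exact L2 _ []
    · show List.Lex (· < ·) _ _
      rw [List.append_assoc, List.cons_append]
      exact L3 c (t ++ [true]) s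

end PrefLang

/-- Every countable linear ordering is isomorphic to the lexicographic ordering
`(L, <_ℓ)` of some prefix language `L ⊆ {0,1}*`. -/
theorem exists_prefix_language_orderIso (σ : Type) [LinearOrder σ] [Countable σ] :
    ∃ L : Set (List Bool), IsPrefixLanguage L ∧
      Nonempty (RelIso ((· < ·) : σ → σ → Prop)
        (fun u v : ↥L => List.Lex (· < ·) u.1 v.1)) := by
  obtain ⟨e⟩ : Nonempty (σ ↪o ℚ) := Order.embedding_from_countable_to_dense σ ℚ
  obtain ⟨i⟩ : Nonempty (ℚ ≃o PrefLang.D) := Order.iso_of_countable_dense ℚ PrefLang.D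
  let f : σ → List Bool := fun s => ((i (e s) : PrefLang.D) : List Bool)
  have hf : Function.Injective f := by
    intro a b h
    exact e.injective (i.injective (Subtype.ext h))
  refine ⟨Set.range f, ?_, ⟨⟨Equiv.ofInjective f hf, ?_⟩⟩⟩
  · rintro - ⟨a, rfl⟩ - ⟨b, rfl⟩ hpre
    have : (i (e a) : PrefLang.D).1 <+: (i (e b) : PrefLang.D).1 := hpre
    obtain ⟨p, hp⟩ := (i (e a)).2
    obtain ⟨q, hq⟩ := (i (e b)).2
    rw [← hp, ← hq] at this
    simp only [f, ← hp, ← hq, PrefLang.E_inj_of_prefix p q this]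
  · intro a b
    show List.Lex (· < ·) (f a) (f b) ↔ a < b
    rw [PrefLang.lex_iff_lt]
    show (i (e a) < i (e b)) ↔ _
    rw [i.lt_iff_lt, e.lt_iff_lt]
end

section
/- Let G be a prefix grammar over {0,1} (every nonterminal generates a prefix language) with no useless nonterminals, such that the lexicographic ordering of L(G) is scattered. Then for every nonterminal X of G, the lexicographic ordering of L(X) is scattered. -/
/-- The language of terminal words generated from the nonterminal `X`. -/
def langOf (g : ContextFreeGrammar.{0} Bool) (X : g.NT) : Set (List Bool) :=
  {w | g.Derives [Symbol.nonterminal X] (w.map Symbol.terminal)}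

/-- A language is scattered when its lexicographic ordering is scattered. -/
def LexScattered (L : Set (List Bool)) : Prop :=
  ScatteredRel ↥L (fun u v => List.Lex (· < ·) u.1 v.1)

/-- A prefix grammar: every nonterminal generates a prefix language. -/
def IsPrefixGrammar (g : ContextFreeGrammar.{0} Bool) : Prop :=
  ∀ X : g.NT, IsPrefixLanguage (langOf g X)

/-- No useless nonterminals: every nonterminal is reachable from the start symbol
and generates at least one terminal word. -/
def NoUselessNonterminals (g : ContextFreeGrammar.{0} Bool) : Prop :=
  ∀ X : g.NT,
    (∃ p q : List (Symbol Bool g.NT),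
      g.Derives [Symbol.nonterminal g.initial] (p ++ [Symbol.nonterminal X] ++ q)) ∧
    (langOf g X).Nonempty

/-- Any sentential form derives some terminal word (using productivity of all NTs). -/
lemma exists_terminal_word (g : ContextFreeGrammar.{0} Bool)
    (huse : NoUselessNonterminals g) :
    ∀ l : List (Symbol Bool g.NT), ∃ w : List Bool,
      g.Derives l (w.map Symbol.terminal) := by
  intro l
  induction l with
  | nil => exact ⟨[], ContextFreeGrammar.Derives.refl _⟩
  | cons s t ih =>
    obtain ⟨w, hw⟩ := ih
    cases s with
    | terminal a =>
      exact ⟨a :: w, by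
        have := hw.append_left [Symbol.terminal a]
        simpa using this⟩
    | nonterminal X =>
      obtain ⟨u, hu⟩ := (huse X).2
      refine ⟨u ++ w, ?_⟩
      have h1 : g.Derives ([Symbol.nonterminal X] ++ t)
          (u.map Symbol.terminal ++ w.map Symbol.terminal) :=
        (hw.append_left _).trans (hu.append_right _)
      simpa using h1

/-- Appending tails preserves lex order, provided the left word is not a prefix. -/
lemma lex_append_of_not_prefix : ∀ {a b : List Bool} (v v' : List Bool),
    ¬ a <+: b → List.Lex (· < ·) a b →
    List.Lex (· < ·) (a ++ v) (b ++ v') := by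
  intro a b v v' hnp h
  induction h with
  | nil => exact absurd (List.nil_prefix) hnp
  | @rel a₁ l₁ a₂ l₂ h => exact List.Lex.rel h
  | @cons a l₁ l₂ h ih =>
    refine List.Lex.cons (ih ?_)
    intro hp
    exact hnp (List.cons_prefix_cons.mpr ⟨rfl, hp⟩)

/-- If `G` is a prefix grammar without useless nonterminals whose generated
language is scattered under the lexicographic order, then the language generated
from every nonterminal is scattered. -/
theorem scattered_grammar_all_nonterminals (g : ContextFreeGrammar.{0} Bool)
    (hpre : IsPrefixGrammar g) (huse : NoUselessNonterminals g)
    (hscat : LexScattered (langOf g g.initial)) :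
    ∀ X : g.NT, LexScattered (langOf g X) := by
  intro X
  obtain ⟨p, q, hpq⟩ := (huse X).1
  obtain ⟨u, hu⟩ := exists_terminal_word g huse p
  obtain ⟨v, hv⟩ := exists_terminal_word g huse q
  -- embedding: w ↦ u ++ w ++ v ∈ L(S)
  have hemb : ∀ w ∈ langOf g X, (u ++ w ++ v) ∈ langOf g g.initial := by
    intro w hw
    have t1 : g.Derives ((p ++ [Symbol.nonterminal X]) ++ q)
        ((p ++ [Symbol.nonterminal X]) ++ v.map Symbol.terminal) :=
      hv.append_left _
    have t2 : g.Derives ((p ++ [Symbol.nonterminal X]) ++ v.map Symbol.terminal)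
        ((p ++ w.map Symbol.terminal) ++ v.map Symbol.terminal) := by
      rw [List.append_assoc, List.append_assoc]
      exact ((hw.append_right _).append_left p)
    have t3 : g.Derives ((p ++ w.map Symbol.terminal) ++ v.map Symbol.terminal)
        ((u.map Symbol.terminal ++ w.map Symbol.terminal) ++ v.map Symbol.terminal) :=
      (hu.append_right _).append_right _
    have := hpq.trans ((t1.trans t2).trans t3)
    simpa [langOf, List.map_append] using this
  -- key order lemma on L(X)
  have hkey : ∀ a ∈ langOf g X, ∀ b ∈ langOf g X,
      List.Lex (· < ·) (u ++ a ++ v) (u ++ b ++ v) → List.Lex (· < ·) a b := by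
    intro a ha b hb h
    by_cases hab : a = b
    · subst hab; exact absurd h (irrefl_of _ _)
    have htri := @trichotomous_of (List Bool) (List.Lex (· < ·))
      (List.Lex.trichotomous _) a b
    rcases htri with h' | h' | h'
    · exact h'
    · exact absurd h' hab
    · exfalso
      have hnp : ¬ b <+: a := fun hp => hab ((hpre X b hb a ha hp).symm)
      have := (lex_append_of_not_prefix v v hnp h').append_left (· < ·) u
      rw [← List.append_assoc, ← List.append_assoc] at this
      exact asymm h this
  have hfwd : ∀ a ∈ langOf g X, ∀ b ∈ langOf g X,
      List.Lex (· < ·) a b → List.Lex (· < ·) (u ++ a ++ v) (u ++ b ++ v) := by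
    intro a ha b hb h
    have hnp : ¬ a <+: b := fun hp => (List.Lex.to_ne (h.imp (fun _ _ h => ne_of_lt h) _ _)) (hpre X a ha b hb hp)
    have := (lex_append_of_not_prefix v v hnp h).append_left (· < ·) u
    rwa [← List.append_assoc, ← List.append_assoc] at this
  -- now transfer density
  intro ⟨S, ⟨a, haS, b, hbS, hab⟩, hdense⟩
  apply hscat
  refine ⟨(fun w : ↥(langOf g X) => (⟨u ++ w.1 ++ v, hemb w.1 w.2⟩ : ↥(langOf g g.initial))) '' S,
    ⟨⟨_, hemb a.1 a.2⟩, ⟨a, haS, rfl⟩, ⟨_, hemb b.1 b.2⟩, ⟨b, hbS, rfl⟩,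
      hfwd a.1 a.2 b.1 b.2 hab⟩, ?_⟩
  rintro _ ⟨a, haS, rfl⟩ _ ⟨b, hbS, rfl⟩ h
  obtain ⟨c, hcS, h1, h2⟩ := hdense a haS b hbS (hkey a.1 a.2 b.1 b.2 h)
  exact ⟨_, ⟨c, hcS, rfl⟩, hfwd a.1 a.2 c.1 c.2 h1, hfwd c.1 c.2 b.1 b.2 h2⟩
end

section
/- Let G be a scattered grammar (a prefix grammar over {0,1} whose generated language is scattered under lexicographic order) with no useless nonterminals, and let X be a nonterminal. If X ⇒* u X p and X ⇒* v X q with u, v ∈ {0,1}* terminal words and p, q sentential forms, then u is a prefix of v or v is a prefix of u. -/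
namespace PPCaux

/-- `A` and `B` share a common prefix `c` followed by `false` in `A` and `true` in `B`. -/
def SD (A B : List Bool) : Prop :=
  ∃ c A' B', A = c ++ false :: A' ∧ B = c ++ true :: B'

lemma SD.lex {A B : List Bool} (h : SD A B) : List.Lex (· < ·) A B := by
  obtain ⟨c, A', B', rfl, rfl⟩ := h
  induction c with
  | nil => exact List.Lex.rel (by decide)
  | cons x c ih => exact List.Lex.cons ih

lemma SD.consx {A B : List Bool} (h : SD A B) (x : Bool) : SD (x :: A) (x :: B) := by
  obtain ⟨c, A', B', rfl, rfl⟩ := h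
  exact ⟨x :: c, A', B', rfl, rfl⟩

lemma SD.appendl {A B : List Bool} (h : SD A B) (π : List Bool) : SD (π ++ A) (π ++ B) := by
  obtain ⟨c, A', B', rfl, rfl⟩ := h
  exact ⟨π ++ c, A', B', by simp, by simp⟩

def dup : List Bool → List Bool
  | [] => []
  | d :: r => d :: d :: dup r

lemma dup_append (s t : List Bool) : dup (s ++ t) = dup s ++ dup t := by
  induction s with
  | nil => rfl
  | cons d r ih => simp [dup, ih]

def enc (t : List Bool) : List Bool := dup t ++ [false, true]

lemma enc_cons (d : Bool) (t : List Bool) : enc (d :: t) = d :: d :: enc t := rfl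

lemma sd_true (t : List Bool) : SD (enc t) (enc (t ++ [true])) :=
  ⟨dup t, [true], [true, false, true], rfl, by simp [enc, dup_append, dup]⟩

lemma sd_false (t : List Bool) : SD (enc (t ++ [false])) (enc t) :=
  ⟨dup t ++ [false], [false, true], [], by simp [enc, dup_append, dup], by simp [enc]⟩

lemma sd_nil_true (s : List Bool) : SD (enc []) (enc (true :: s)) :=
  ⟨[], [true], true :: enc s, rfl, rfl⟩

lemma sd_false_nil (s : List Bool) : SD (enc (false :: s)) (enc []) :=
  ⟨[false], enc s, [], rfl, rfl⟩

lemma sd_cross (s s' : List Bool) : SD (enc (false :: s)) (enc (true :: s')) :=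
  ⟨[], false :: enc s, true :: enc s', rfl, rfl⟩

lemma between : ∀ t t' : List Bool, t ≠ t' →
    (SD (enc t) (enc t') ∧ ∃ t'', SD (enc t) (enc t'') ∧ SD (enc t'') (enc t')) ∨
    (SD (enc t') (enc t) ∧ ∃ t'', SD (enc t') (enc t'') ∧ SD (enc t'') (enc t))
  | [], [], h => absurd rfl h
  | [], true :: r, _ => Or.inl ⟨sd_nil_true r, true :: (r ++ [false]), by
      refine ⟨sd_nil_true _, ?_⟩
      simpa using sd_false (true :: r)⟩
  | [], false :: r, _ => Or.inr ⟨sd_false_nil r, false :: (r ++ [true]), by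
      refine ⟨?_, sd_false_nil _⟩
      simpa using sd_true (false :: r)⟩
  | true :: r, [], _ => Or.inr ⟨sd_nil_true r, true :: (r ++ [false]), by
      refine ⟨sd_nil_true _, ?_⟩
      simpa using sd_false (true :: r)⟩
  | false :: r, [], _ => Or.inl ⟨sd_false_nil r, false :: (r ++ [true]), by
      refine ⟨?_, sd_false_nil _⟩
      simpa using sd_true (false :: r)⟩
  | false :: r, true :: r', _ => Or.inl ⟨sd_cross r r', false :: (r ++ [true]), by
      refine ⟨?_, sd_cross _ r'⟩
      simpa using sd_true (false :: r)⟩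
  | true :: r, false :: r', _ => Or.inr ⟨sd_cross r' r, false :: (r' ++ [true]), by
      refine ⟨?_, sd_cross _ r⟩
      simpa using sd_true (false :: r')⟩
  | false :: r, false :: r', h => by
      have hr : r ≠ r' := fun e => h (by rw [e])
      rcases between r r' hr with ⟨hd, t'', hA, hB⟩ | ⟨hd, t'', hA, hB⟩
      · exact Or.inl ⟨by rw [enc_cons, enc_cons]; exact (hd.consx _).consx _,
          false :: t'', by rw [enc_cons, enc_cons]; exact (hA.consx _).consx _,
          by rw [enc_cons, enc_cons]; exact (hB.consx _).consx _⟩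
      · exact Or.inr ⟨by rw [enc_cons, enc_cons]; exact (hd.consx _).consx _,
          false :: t'', by rw [enc_cons, enc_cons]; exact (hA.consx _).consx _,
          by rw [enc_cons, enc_cons]; exact (hB.consx _).consx _⟩
  | true :: r, true :: r', h => by
      have hr : r ≠ r' := fun e => h (by rw [e])
      rcases between r r' hr with ⟨hd, t'', hA, hB⟩ | ⟨hd, t'', hA, hB⟩
      · exact Or.inl ⟨by rw [enc_cons, enc_cons]; exact (hd.consx _).consx _,
          true :: t'', by rw [enc_cons, enc_cons]; exact (hA.consx _).consx _,
          by rw [enc_cons, enc_cons]; exact (hB.consx _).consx _⟩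
      · exact Or.inr ⟨by rw [enc_cons, enc_cons]; exact (hd.consx _).consx _,
          true :: t'', by rw [enc_cons, enc_cons]; exact (hA.consx _).consx _,
          by rw [enc_cons, enc_cons]; exact (hB.consx _).consx _⟩

/-- Substitute block `a` for `false` and block `b` for `true`. -/
def blk (a b : List Bool) : List Bool → List Bool
  | [] => []
  | d :: s => (if d then b else a) ++ blk a b s

lemma blk_append (a b s t : List Bool) : blk a b (s ++ t) = blk a b s ++ blk a b t := by
  induction s with
  | nil => rfl
  | cons d r ih => simp [blk, ih]

lemma sd_blk {a b c0 a1 b1 : List Bool} (ha : a = c0 ++ false :: a1)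
    (hb : b = c0 ++ true :: b1) {s s' : List Bool} (h : SD s s') (m m' : List Bool) :
    SD (blk a b s ++ m) (blk a b s' ++ m') := by
  obtain ⟨c, A', B', rfl, rfl⟩ := h
  refine ⟨blk a b c ++ c0, a1 ++ blk a b A' ++ m, b1 ++ blk a b B' ++ m', ?_, ?_⟩
  · rw [blk_append]; simp [blk, ha, List.append_assoc]
  · rw [blk_append]; simp [blk, hb, List.append_assoc]

lemma firstdiff : ∀ u v : List Bool, ¬ u <+: v → ¬ v <+: u →
    ∃ (c u1 v1 : List Bool) (x y : Bool), x ≠ y ∧ u = c ++ x :: u1 ∧ v = c ++ y :: v1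
  | [], v, h, _ => absurd (List.nil_prefix) h
  | (x :: u), [], _, h => absurd (List.nil_prefix) h
  | (x :: u), (y :: v), h1, h2 => by
      by_cases hxy : x = y
      · subst hxy
        have h1' : ¬ u <+: v := fun hp => h1 (by simpa using hp)
        have h2' : ¬ v <+: u := fun hp => h2 (by simpa using hp)
        obtain ⟨c, u1, v1, a, b, hab, hu, hv⟩ := firstdiff u v h1' h2'
        exact ⟨x :: c, u1, v1, a, b, hab, by rw [hu]; rfl, by rw [hv]; rfl⟩
      · exact ⟨[], u, v, x, y, hxy, rfl, rfl⟩

open ContextFreeGrammar in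
lemma derives_append {g : ContextFreeGrammar.{0} Bool} {x x' y y' : List (Symbol Bool g.NT)}
    (hx : g.Derives x x') (hy : g.Derives y y') : g.Derives (x ++ y) (x' ++ y') :=
  (hx.append_right y).trans (hy.append_left x')

open ContextFreeGrammar in
lemma core (g : ContextFreeGrammar.{0} Bool) (huse : NoUselessNonterminals g)
    (hscat : LexScattered (langOf g g.initial))
    (X : g.NT) (u v : List Bool) (p q : List (Symbol Bool g.NT))
    (h1 : g.Derives [Symbol.nonterminal X]
      (u.map Symbol.terminal ++ [Symbol.nonterminal X] ++ p))
    (h2 : g.Derives [Symbol.nonterminal X]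
      (v.map Symbol.terminal ++ [Symbol.nonterminal X] ++ q))
    (c0 u1 v1 : List Bool) (hu : u = c0 ++ false :: u1) (hv : v = c0 ++ true :: v1) :
    False := by
  set a : List Bool := u ++ v with ha_def
  set b : List Bool := v ++ u with hb_def
  have ha : a = c0 ++ false :: (u1 ++ v) := by rw [ha_def, hu]; simp
  have hb : b = c0 ++ true :: (v1 ++ u) := by rw [hb_def, hv]; simp
  -- pumping with blocks a and b
  have hda : g.Derives [Symbol.nonterminal X]
      (a.map Symbol.terminal ++ [Symbol.nonterminal X] ++ (q ++ p)) := by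
    have := h1.trans ((h2.append_left (u.map Symbol.terminal)).append_right p)
    simpa [ha_def, List.map_append, List.append_assoc] using this
  have hdb : g.Derives [Symbol.nonterminal X]
      (b.map Symbol.terminal ++ [Symbol.nonterminal X] ++ (p ++ q)) := by
    have := h2.trans ((h1.append_left (v.map Symbol.terminal)).append_right q)
    simpa [hb_def, List.map_append, List.append_assoc] using this
  have hblk : ∀ s : List Bool, ∃ r : List (Symbol Bool g.NT),
      g.Derives [Symbol.nonterminal X]
        ((blk a b s).map Symbol.terminal ++ [Symbol.nonterminal X] ++ r) := by
    intro s
    induction s with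
    | nil =>
        refine ⟨[], ?_⟩
        simpa [blk] using Derives.refl (g := g) [Symbol.nonterminal X]
    | cons d s ih =>
        obtain ⟨r, hr⟩ := ih
        have hd : g.Derives [Symbol.nonterminal X]
            ((if d then b else a).map Symbol.terminal ++ [Symbol.nonterminal X] ++
              (if d then p ++ q else q ++ p)) := by
          cases d
          · simpa using hda
          · simpa using hdb
        refine ⟨r ++ (if d then p ++ q else q ++ p), ?_⟩
        have := hd.trans
          ((hr.append_left ((if d then b else a).map Symbol.terminal)).append_right
            (if d then p ++ q else q ++ p))
        simpa [blk, List.map_append, List.append_assoc] using this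
  -- every sentential form derives some terminal word
  have hterm : ∀ s : List (Symbol Bool g.NT), ∃ w : List Bool,
      g.Derives s (w.map Symbol.terminal) := by
    intro s
    induction s with
    | nil => exact ⟨[], Derives.refl []⟩
    | cons sym s ih =>
        obtain ⟨w, hw⟩ := ih
        cases sym with
        | terminal t =>
            exact ⟨t :: w, by simpa using hw.append_left [Symbol.terminal t]⟩
        | nonterminal Y =>
            obtain ⟨w0, hw0⟩ := (huse Y).2
            exact ⟨w0 ++ w, by
              simpa [List.map_append] using
                (hw0.append_right s).trans (hw.append_left (w0.map Symbol.terminal))⟩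
  obtain ⟨p0, q0, hreach⟩ := (huse X).1
  obtain ⟨π, hπ⟩ := hterm p0
  obtain ⟨κ, hκ⟩ := hterm q0
  obtain ⟨w0, hw0⟩ := (huse X).2
  have Zex : ∀ t : List Bool, ∃ z : List Bool, z ∈ langOf g g.initial ∧
      ∃ rest : List Bool, z = π ++ blk a b (enc t) ++ rest := by
    intro t
    obtain ⟨r, hr⟩ := hblk (enc t)
    obtain ⟨ρ, hρ⟩ := hterm r
    refine ⟨π ++ blk a b (enc t) ++ (w0 ++ ρ ++ κ), ?_, _, rfl⟩
    simp only [langOf, Set.mem_setOf_eq]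
    have D1 := hreach.trans
      (derives_append (derives_append hπ (Derives.refl [Symbol.nonterminal X])) hκ)
    have D2 := (hr.append_left (π.map Symbol.terminal)).append_right (κ.map Symbol.terminal)
    have E := derives_append
      (derives_append (Derives.refl (π.map Symbol.terminal))
        (derives_append
          (derives_append (Derives.refl ((blk a b (enc t)).map Symbol.terminal)) hw0) hρ))
      (Derives.refl (κ.map Symbol.terminal))
    have total := (D1.trans D2).trans E
    simpa [List.map_append, List.append_assoc] using total
  choose Z hZmem hZeq using Zex
  have hSDZ : ∀ {t t' : List Bool}, SD (enc t) (enc t') → SD (Z t) (Z t') := by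
    intro t t' h
    obtain ⟨rest, he⟩ := hZeq t
    obtain ⟨rest', he'⟩ := hZeq t'
    rw [he, he', List.append_assoc, List.append_assoc]
    exact (sd_blk ha hb h rest rest').appendl π
  set F : List Bool → ↥(langOf g g.initial) := fun t => ⟨Z t, hZmem t⟩ with hF
  apply hscat
  refine ⟨Set.range F, ⟨F [], ⟨[], rfl⟩, F [true], ⟨[true], rfl⟩, ?_⟩, ?_⟩
  · exact (hSDZ (sd_nil_true [])).lex
  · rintro x ⟨t, rfl⟩ y ⟨t', rfl⟩ hxy
    have hne : t ≠ t' := by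
      rintro rfl
      exact asymm hxy hxy
    rcases between t t' hne with ⟨_, t'', hA, hB⟩ | ⟨hdir, _⟩
    · exact ⟨F t'', ⟨t'', rfl⟩, (hSDZ hA).lex, (hSDZ hB).lex⟩
    · exact absurd ((hSDZ hdir).lex) (asymm hxy)

end PPCaux

/-- In a scattered grammar (a prefix grammar with scattered generated language)
without useless nonterminals, any two terminal pumping prefixes at a nonterminal
`X` (i.e. `u, v` with `X ⇒* u X p` and `X ⇒* v X q`) are prefix-comparable. -/
theorem pumping_prefixes_comparable (g : ContextFreeGrammar.{0} Bool)
    (hpre : IsPrefixGrammar g) (huse : NoUselessNonterminals g)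
    (hscat : LexScattered (langOf g g.initial))
    (X : g.NT) (u v : List Bool) (p q : List (Symbol Bool g.NT))
    (h1 : g.Derives [Symbol.nonterminal X]
      (u.map Symbol.terminal ++ [Symbol.nonterminal X] ++ p))
    (h2 : g.Derives [Symbol.nonterminal X]
      (v.map Symbol.terminal ++ [Symbol.nonterminal X] ++ q)) :
    u <+: v ∨ v <+: u := by
  by_contra hcon
  push_neg at hcon
  obtain ⟨hnuv, hnvu⟩ := hcon
  obtain ⟨c, u1, v1, x, y, hxy, hu, hv⟩ := PPCaux.firstdiff u v hnuv hnvu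
  cases x <;> cases y
  · exact absurd rfl hxy
  · exact PPCaux.core g huse hscat X u v p q h1 h2 c u1 v1 hu hv
  · exact PPCaux.core g huse hscat X v u q p h2 h1 c v1 u1 hv hu
  · exact absurd rfl hxy
end
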